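/- arXiv:1611.10268 — 6 statements merged into one kernel-verified Lean document; each statement's English description precedes it below -/
import Mathlib

section
/- Let (p₀,q₀), (p₁,q₁) ∈ T. The channels BAC(p₀,q₀) and BAC(p₁,q₁) are n-equivalent for every n ≥ 1 if and only if S(p₀,q₀) = S(p₁,q₁). -/
open Real Set

/-- The parameter space `T = {(p,q) : 0 ≤ p ≤ q, p + q < 1} \ {(0,0)}`. -/
def bacT : Set (ℝ × ℝ) := {pq | 0 ≤ pq.1 ∧ pq.1 ≤ pq.2 ∧ pq.1 + pq.2 < 1 ∧ pq ≠ (0, 0)}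

/-- The BAC-function `S`. -/
noncomputable def bacS (p q : ℝ) : ℝ :=
  if p = 0 then 0 else (Real.log (1 - p) - Real.log q) / (Real.log (1 - q) - Real.log p)

/-- Transition probability of the n-fold binary asymmetric channel `BAC^n(p,q)`:
`bacPr p q x y = Pr(x|y)`. -/
noncomputable def bacPr (p q : ℝ) {n : ℕ} (x y : Fin n → Bool) : ℝ :=
  ∏ i, if x i then (if y i then 1 - q else p) else (if y i then q else 1 - p)

/-- The channels `BAC(p,q)` and `BAC(p',q')` are `n`-equivalent. -/
def nEquiv (n : ℕ) (p q p' q' : ℝ) : Prop :=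
  ∀ x y z : Fin n → Bool,
    (bacPr p q x y ≤ bacPr p q x z ↔ bacPr p' q' x y ≤ bacPr p' q' x z)

/-- A point `(p,q) ∈ T` is `n`-stable if all nearby points of `T` are `n`-equivalent to it. -/
def nStable (n : ℕ) (pq : ℝ × ℝ) : Prop :=
  ∃ ε > 0, ∀ pq' ∈ bacT, ‖pq' - pq‖ < ε → nEquiv n pq.1 pq.2 pq'.1 pq'.2

/-! ### Auxiliary lemmas -/

lemma bac_q_pos {p q : ℝ} (h : (p,q) ∈ bacT) : 0 < q := by
  obtain ⟨h1, h2, h3, h4⟩ := h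
  rcases lt_or_eq_of_le (h1.trans h2) with h | h
  · exact h
  · exfalso; apply h4; simp only [Prod.mk.injEq]
    constructor <;> nlinarith

lemma bac_q_lt_one {p q : ℝ} (h : (p,q) ∈ bacT) : q < 1 := by
  obtain ⟨h1, h2, h3, h4⟩ := h; linarith

lemma bac_A_pos {p q : ℝ} (h : (p,q) ∈ bacT) (hp : 0 < p) :
    0 < Real.log (1 - p) - Real.log q := by
  have hq := bac_q_pos h
  have : q < 1 - p := by obtain ⟨h1, h2, h3, h4⟩ := h; linarith
  have := Real.log_lt_log hq this
  linarith

lemma bac_B_pos {p q : ℝ} (h : (p,q) ∈ bacT) (hp : 0 < p) :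
    0 < Real.log (1 - q) - Real.log p := by
  have : p < 1 - q := by obtain ⟨h1, h2, h3, h4⟩ := h; linarith
  have := Real.log_lt_log hp this
  linarith

lemma bacS_eq {p q : ℝ} (hp : p ≠ 0) :
    bacS p q = (Real.log (1 - p) - Real.log q) / (Real.log (1 - q) - Real.log p) := by
  simp [bacS, hp]

lemma bacS_pos {p q : ℝ} (h : (p,q) ∈ bacT) (hp : 0 < p) : 0 < bacS p q := by
  rw [bacS_eq hp.ne']
  exact div_pos (bac_A_pos h hp) (bac_B_pos h hp)

/-- the signed counts -/
noncomputable def bacSig {n : ℕ} (x y z : Fin n → Bool) : ℝ :=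
  ∑ i, if x i then 0 else ((if z i then 1 else 0) - (if y i then 1 else 0))

noncomputable def bacTau {n : ℕ} (x y z : Fin n → Bool) : ℝ :=
  ∑ i, if x i then ((if z i then (1:ℝ) else 0) - (if y i then 1 else 0)) else 0

lemma bacPr_pos {p q : ℝ} (h : (p,q) ∈ bacT) (hp : 0 < p) {n : ℕ} (x y : Fin n → Bool) :
    0 < bacPr p q x y := by
  have hq := bac_q_pos h
  have hq1 := bac_q_lt_one h
  have hp1 : p < 1 := by obtain ⟨h1,h2,h3,h4⟩ := h; linarith
  apply Finset.prod_pos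
  intro i _
  rcases x i <;> rcases y i <;> simp <;> linarith

/-- The key characterization of the order for `p > 0`. -/
lemma bacPr_le_iff {p q : ℝ} (h : (p,q) ∈ bacT) (hp : 0 < p) {n : ℕ} (x y z : Fin n → Bool) :
    bacPr p q x y ≤ bacPr p q x z ↔ bacSig x y z * bacS p q ≤ bacTau x y z := by
  have hq := bac_q_pos h
  have hq1 := bac_q_lt_one h
  have hp1 : p < 1 := by obtain ⟨h1,h2,h3,h4⟩ := h; linarith
  have hA := bac_A_pos h hp
  have hB := bac_B_pos h hp
  set A := Real.log (1 - p) - Real.log q with hAdef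
  set B := Real.log (1 - q) - Real.log p with hBdef
  have hy := bacPr_pos h hp x y
  have hz := bacPr_pos h hp x z
  rw [← Real.log_le_log_iff hy hz]
  unfold bacPr
  rw [Real.log_prod (fun i _ => by rcases x i <;> rcases y i <;> simp <;> intro hc <;> linarith),
      Real.log_prod (fun i _ => by rcases x i <;> rcases z i <;> simp <;> intro hc <;> linarith)]
  have key : (∑ i, Real.log (if x i then (if z i then 1 - q else p) else (if z i then q else 1 - p)))
      - (∑ i, Real.log (if x i then (if y i then 1 - q else p) else (if y i then q else 1 - p)))
      = bacTau x y z * B - bacSig x y z * A := by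
    unfold bacSig bacTau
    rw [← Finset.sum_sub_distrib, Finset.sum_mul, Finset.sum_mul, ← Finset.sum_sub_distrib]
    apply Finset.sum_congr rfl
    intro i _
    rcases x i <;> rcases y i <;> rcases z i <;> simp [hAdef, hBdef] <;> ring
  constructor
  · intro hle
    have h1 : 0 ≤ bacTau x y z * B - bacSig x y z * A := by rw [← key]; linarith
    have h2 : bacSig x y z * A ≤ bacTau x y z * B := by linarith
    rw [bacS_eq hp.ne', ← hAdef, ← hBdef]
    rw [mul_div_assoc'] at *
    rw [div_le_iff₀ hB]
    linarith
  · intro hle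
    rw [bacS_eq hp.ne', ← hAdef, ← hBdef, mul_div_assoc', div_le_iff₀ hB] at hle
    linarith [key]

/-! ### The `p = 0` case -/

lemma bacPr_zero_of_bad {q : ℝ} {n : ℕ} {x y : Fin n → Bool} (i : Fin n)
    (hx : x i = true) (hy : y i = false) : bacPr 0 q x y = 0 :=
  Finset.prod_eq_zero (Finset.mem_univ i) (by simp [hx, hy])

lemma bacPr_zero_nonneg {q : ℝ} (hq0 : 0 ≤ q) (hq1 : q ≤ 1) {n : ℕ} (x y : Fin n → Bool) :
    0 ≤ bacPr 0 q x y := by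
  apply Finset.prod_nonneg
  intro i _
  rcases x i <;> rcases y i <;> simp <;> linarith

lemma bacPr_zero_eq {q : ℝ} {n : ℕ} {x y : Fin n → Bool}
    (hgood : ∀ i, x i = true → y i = true) :
    bacPr 0 q x y = q ^ (Finset.univ.filter (fun i => x i = false ∧ y i = true)).card
      * (1 - q) ^ (Finset.univ.filter (fun i => x i = true)).card := by
  have hX : (∏ i ∈ Finset.univ.filter (fun i => x i = true),
      (if x i then (if y i then 1 - q else 0) else (if y i then q else 1 - 0)))
      = (1 - q) ^ (Finset.univ.filter (fun i => x i = true)).card := by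
    rw [Finset.prod_congr rfl (fun i hi => ?_), Finset.prod_const]
    rw [Finset.mem_filter] at hi
    simp [hi.2, hgood i hi.2]
  have hNX : (∏ i ∈ Finset.univ.filter (fun i => ¬ x i = true),
      (if x i then (if y i then 1 - q else 0) else (if y i then q else 1 - 0)))
      = q ^ (Finset.univ.filter (fun i => x i = false ∧ y i = true)).card := by
    rw [← Finset.prod_filter_mul_prod_filter_not
      (Finset.univ.filter (fun i => ¬ x i = true)) (fun i => y i = true)]
    rw [Finset.filter_filter]
    have h1 : Finset.univ.filter (fun i => ¬x i = true ∧ y i = true)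
        = Finset.univ.filter (fun i => x i = false ∧ y i = true) := by
      apply Finset.filter_congr; intro i _; simp
    rw [h1]
    have h2 : ∀ i ∈ Finset.univ.filter (fun i => x i = false ∧ y i = true),
        (if x i then (if y i then 1 - q else 0) else (if y i then q else 1 - 0)) = q := by
      intro i hi; rw [Finset.mem_filter] at hi; simp [hi.2.1, hi.2.2]
    rw [Finset.prod_congr rfl h2, Finset.prod_const]
    have h3 : ∀ i ∈ (Finset.univ.filter (fun i => ¬x i = true)).filter (fun i => ¬ y i = true),
        (if x i then (if y i then 1 - q else 0) else (if y i then q else 1 - 0)) = 1 := by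
      intro i hi
      simp only [Finset.mem_filter] at hi
      simp only [Bool.not_eq_true] at hi
      simp [hi.1.2, hi.2]
    rw [Finset.prod_congr rfl h3, Finset.prod_const_one, mul_one]
  calc bacPr 0 q x y
      = (∏ i ∈ Finset.univ.filter (fun i => x i = true),
          (if x i then (if y i then 1 - q else 0) else (if y i then q else 1 - 0)))
        * (∏ i ∈ Finset.univ.filter (fun i => ¬ x i = true),
          (if x i then (if y i then 1 - q else 0) else (if y i then q else 1 - 0))) :=
        (Finset.prod_filter_mul_prod_filter_not Finset.univ (fun i => x i = true) _).symm
    _ = _ := by rw [hX, hNX, mul_comm]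

lemma bacPr_zero_le_iff {q : ℝ} (hq0 : 0 < q) (hq1 : q < 1) {n : ℕ} (x y z : Fin n → Bool) :
    bacPr 0 q x y ≤ bacPr 0 q x z ↔
      ((∃ i, x i = true ∧ y i = false) ∨
        ((∀ i, x i = true → z i = true) ∧
          (Finset.univ.filter (fun i => x i = false ∧ z i = true)).card ≤
          (Finset.univ.filter (fun i => x i = false ∧ y i = true)).card)) := by
  by_cases hby : ∃ i, x i = true ∧ y i = false
  · obtain ⟨i, hxi, hyi⟩ := hby
    rw [bacPr_zero_of_bad i hxi hyi]
    simp only [bacPr_zero_nonneg hq0.le hq1.le, true_iff]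
    exact Or.inl ⟨i, hxi, hyi⟩
  · push_neg at hby
    have hgood : ∀ i, x i = true → y i = true := by
      intro i hxi
      have := hby i hxi
      simpa using this
    by_cases hbz : ∃ i, x i = true ∧ z i = false
    · obtain ⟨i, hxi, hzi⟩ := hbz
      rw [bacPr_zero_of_bad i hxi hzi]
      have hpos : 0 < bacPr 0 q x y := by
        rw [bacPr_zero_eq hgood]
        have h1q : (0:ℝ) < 1 - q := by linarith
        exact mul_pos (pow_pos hq0 _) (pow_pos h1q _)
      constructor
      · intro hle; linarith
      · rintro (⟨j, hxj, hyj⟩ | ⟨hg, _⟩)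
        · exact absurd (hgood j hxj) (by simp [hyj])
        · exact absurd (hg i hxi) (by simp [hzi])
    · push_neg at hbz
      have hgoodz : ∀ i, x i = true → z i = true := by
        intro i hxi; simpa using hbz i hxi
      rw [bacPr_zero_eq hgood, bacPr_zero_eq hgoodz]
      have h1q : 0 < (1 - q) ^ (Finset.univ.filter (fun i => x i = true)).card :=
        pow_pos (by linarith) _
      rw [mul_le_mul_iff_left₀ h1q]
      have hpow : ∀ m k : ℕ, q ^ m ≤ q ^ k ↔ k ≤ m := by
        intro m k
        constructor
        · intro hle
          by_contra hlt
          push_neg at hlt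
          exact absurd ((pow_lt_pow_iff_right_of_lt_one₀ hq0 hq1).mpr hlt).not_ge (by simpa using hle)
        · intro hle
          exact pow_le_pow_of_le_one hq0.le hq1.le hle
      rw [hpow]
      constructor
      · intro hle
        right
        exact ⟨hgoodz, hle⟩
      · rintro (⟨j, hxj, hyj⟩ | ⟨_, hle⟩)
        · exact absurd (hgood j hxj) (by simp [hyj])
        · exact hle

/-! ### Special words -/

def bacX (s t : ℕ) : Fin (s + t) → Bool :=
  Fin.addCases (fun _ => false) (fun _ => true)

lemma bacSig_spec (s t : ℕ) :
    bacSig (bacX s t) (fun _ => false) (fun _ => true) = s := by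
  unfold bacSig bacX
  rw [Fin.sum_univ_add]
  simp

lemma bacTau_spec (s t : ℕ) :
    bacTau (bacX s t) (fun _ => false) (fun _ => true) = t := by
  unfold bacTau bacX
  rw [Fin.sum_univ_add]
  simp

lemma bacPr_two_a (p q : ℝ) :
    bacPr p q (fun _ : Fin 2 => true) (![false, true]) = p * (1 - q) := by
  unfold bacPr
  rw [Fin.prod_univ_two]
  simp

lemma bacPr_two_b (p q : ℝ) :
    bacPr p q (fun _ : Fin 2 => true) (fun _ => false) = p * p := by
  unfold bacPr
  rw [Fin.prod_univ_two]
  simp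

/-- Mixed case is impossible. -/
lemma bac_mixed {p₀ q₀ p₁ q₁ : ℝ} (h₀ : (p₀, q₀) ∈ bacT) (h₁ : (p₁, q₁) ∈ bacT)
    (hp₀ : p₀ = 0) (hp₁ : p₁ ≠ 0) (hE : nEquiv 2 p₀ q₀ p₁ q₁) : False := by
  have hp₁' : 0 < p₁ := lt_of_le_of_ne h₁.1 (Ne.symm hp₁)
  have := hE (fun _ => true) (![false, true]) (fun _ => false)
  rw [bacPr_two_a, bacPr_two_b, bacPr_two_a, bacPr_two_b, hp₀] at this
  have h2 : p₁ * (1 - q₁) ≤ p₁ * p₁ := this.mp (by simp)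
  have h3 : 1 - q₁ ≤ p₁ := le_of_mul_le_mul_left h2 hp₁'
  have h4 := h₁.2.2.1
  linarith

/-- If both p's are positive and `S₀ < S₁`, the channels can't be `n`-equivalent for all n. -/
lemma bac_not_lt {p₀ q₀ p₁ q₁ : ℝ} (h₀ : (p₀, q₀) ∈ bacT) (h₁ : (p₁, q₁) ∈ bacT)
    (hp₀ : 0 < p₀) (hp₁ : 0 < p₁) (hE : ∀ n : ℕ, 1 ≤ n → nEquiv n p₀ q₀ p₁ q₁)
    (hlt : bacS p₀ q₀ < bacS p₁ q₁) : False := by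
  obtain ⟨r, hr1, hr2⟩ := exists_rat_btwn hlt
  have hrpos : (0:ℝ) < (r:ℝ) := lt_trans (bacS_pos h₀ hp₀) hr1
  have hrpos' : 0 < r := by exact_mod_cast hrpos
  set s := r.den with hs
  set t := r.num.toNat with ht
  have hsd : 0 < s := r.pos
  have hnum : (0:ℤ) < r.num := Rat.num_pos.mpr hrpos'
  have htnum : (t:ℤ) = r.num := Int.toNat_of_nonneg hnum.le
  have hcast : (r:ℝ) = (t:ℝ) / (s:ℝ)  := by
    rw [Rat.cast_def]
    congr 1
    exact_mod_cast htnum.symm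
  have hs' : (0:ℝ) < (s:ℝ) := by exact_mod_cast hsd
  have key := hE (s + t) (by omega) (bacX s t) (fun _ => false) (fun _ => true)
  rw [bacPr_le_iff h₀ hp₀, bacPr_le_iff h₁ hp₁, bacSig_spec, bacTau_spec] at key
  have hL : (s:ℝ) * bacS p₀ q₀ ≤ t := by
    rw [hcast] at hr1
    rw [lt_div_iff₀ hs'] at hr1
    nlinarith
  have hR := key.mp hL
  rw [hcast] at hr2
  rw [div_lt_iff₀ hs'] at hr2
  nlinarith

theorem stmt11 (p₀ q₀ p₁ q₁ : ℝ) (h₀ : (p₀, q₀) ∈ bacT) (h₁ : (p₁, q₁) ∈ bacT) :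
    (∀ n : ℕ, 1 ≤ n → nEquiv n p₀ q₀ p₁ q₁) ↔ bacS p₀ q₀ = bacS p₁ q₁ := by
  constructor
  · intro hE
    by_cases hp₀ : p₀ = 0
    · by_cases hp₁ : p₁ = 0
      · simp [bacS, hp₀, hp₁]
      · exact absurd (bac_mixed h₀ h₁ hp₀ hp₁ (hE 2 (by norm_num))) (fun h => h)
    · by_cases hp₁ : p₁ = 0
      · refine absurd (bac_mixed h₁ h₀ hp₁ hp₀ ?_) (fun h => h)
        intro x y z
        exact (hE 2 (by norm_num) x y z).symm
      · have hp₀' : 0 < p₀ := lt_of_le_of_ne h₀.1 (Ne.symm hp₀)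
        have hp₁' : 0 < p₁ := lt_of_le_of_ne h₁.1 (Ne.symm hp₁)
        by_contra hS
        rcases lt_or_gt_of_ne hS with h | h
        · exact bac_not_lt h₀ h₁ hp₀' hp₁' hE h
        · refine bac_not_lt h₁ h₀ hp₁' hp₀' ?_ h
          intro n hn x y z
          exact (hE n hn x y z).symm
  · intro hS n hn
    by_cases hp₀ : p₀ = 0
    · have hp₁ : p₁ = 0 := by
        by_contra hp₁
        have hp₁' : 0 < p₁ := lt_of_le_of_ne h₁.1 (Ne.symm hp₁)
        have := bacS_pos h₁ hp₁'
        rw [← hS] at this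
        simp [bacS, hp₀] at this
      subst hp₀; subst hp₁
      intro x y z
      rw [bacPr_zero_le_iff (bac_q_pos h₀) (bac_q_lt_one h₀),
          bacPr_zero_le_iff (bac_q_pos h₁) (bac_q_lt_one h₁)]
    · have hp₁ : p₁ ≠ 0 := by
        intro hp₁
        have hp₀' : 0 < p₀ := lt_of_le_of_ne h₀.1 (Ne.symm hp₀)
        have := bacS_pos h₀ hp₀'
        rw [hS] at this
        simp [bacS, hp₁] at this
      have hp₀' : 0 < p₀ := lt_of_le_of_ne h₀.1 (Ne.symm hp₀)
      have hp₁' : 0 < p₁ := lt_of_le_of_ne h₁.1 (Ne.symm hp₁)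
      intro x y z
      rw [bacPr_le_iff h₀ hp₀' x y z, bacPr_le_iff h₁ hp₁' x y z, hS]
end

section
/- A point (p,q) ∈ T is n-stable for every n ≥ 1 if and only if S(p,q) is irrational. -/
open Real Set

/-! ### Auxiliary lemmas -/

lemma prod_bool (g : Bool → ℝ) (b a : ℕ) :
    (∏ i : Fin (b + a), g (decide (b ≤ (i : ℕ)))) = g false ^ b * g true ^ a := by
  rw [Fin.prod_univ_add]
  congr 1
  · rw [Finset.prod_congr rfl (fun i _ => ?_), Finset.prod_const, Finset.card_univ,
      Fintype.card_fin]
    have h : ((Fin.castAdd a i : Fin (b + a)) : ℕ) = (i : ℕ) := rfl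
    rw [h, decide_eq_false (Nat.not_le.mpr i.isLt)]
  · rw [Finset.prod_congr rfl (fun i _ => ?_), Finset.prod_const, Finset.card_univ,
      Fintype.card_fin]
    have h : ((Fin.natAdd b i : Fin (b + a)) : ℕ) = b + (i : ℕ) := rfl
    rw [h, decide_eq_true (Nat.le_add_right b i)]

lemma bacPr_allfalse (ρ σ : ℝ) (b a : ℕ) :
    bacPr ρ σ (fun i : Fin (b + a) => decide (b ≤ (i : ℕ))) (fun _ => false)
      = (1 - ρ) ^ b * ρ ^ a := by
  have := prod_bool (fun s => if s then ρ else 1 - ρ) b a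
  simpa [bacPr] using this

lemma bacPr_alltrue (ρ σ : ℝ) (b a : ℕ) :
    bacPr ρ σ (fun i : Fin (b + a) => decide (b ≤ (i : ℕ))) (fun _ => true)
      = σ ^ b * (1 - σ) ^ a := by
  have := prod_bool (fun s => if s then 1 - σ else σ) b a
  simpa [bacPr] using this

lemma bacPr_pos_s12 {n : ℕ} {ρ σ : ℝ} (h1 : 0 < ρ) (h2 : ρ < 1) (h3 : 0 < σ) (h4 : σ < 1)
    (x y : Fin n → Bool) : 0 < bacPr ρ σ x y := by
  apply Finset.prod_pos
  intro i _
  rcases x i <;> rcases y i <;> simp <;> linarith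

/-- The coefficient `k` counting sign changes on coordinates where `x` is `0`. -/
def kk {n : ℕ} (x y z : Fin n → Bool) : ℤ :=
  ∑ i, if x i then 0 else ((if y i then 1 else 0) - (if z i then 1 else 0))

/-- The coefficient `m` counting sign changes on coordinates where `x` is `1`. -/
def mm {n : ℕ} (x y z : Fin n → Bool) : ℤ :=
  ∑ i, if x i then ((if y i then 1 else 0) - (if z i then 1 else 0)) else 0

lemma kk_bound {n : ℕ} (x y z : Fin n → Bool) : |kk x y z| ≤ (n : ℤ) := by
  calc |kk x y z|
      ≤ ∑ i : Fin n, |if x i then (0:ℤ)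
          else ((if y i then 1 else 0) - (if z i then 1 else 0))| :=
        Finset.abs_sum_le_sum_abs _ _
    _ ≤ ∑ _i : Fin n, (1:ℤ) := by
        apply Finset.sum_le_sum
        intro i _
        rcases x i <;> rcases y i <;> rcases z i <;> simp
    _ = (n : ℤ) := by simp

lemma mm_bound {n : ℕ} (x y z : Fin n → Bool) : |mm x y z| ≤ (n : ℤ) := by
  calc |mm x y z|
      ≤ ∑ i : Fin n, |if x i then ((if y i then 1 else 0) - (if z i then 1 else 0))
          else (0:ℤ)| :=
        Finset.abs_sum_le_sum_abs _ _
    _ ≤ ∑ _i : Fin n, (1:ℤ) := by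
        apply Finset.sum_le_sum
        intro i _
        rcases x i <;> rcases y i <;> rcases z i <;> simp
    _ = (n : ℤ) := by simp

lemma log_diff {n : ℕ} {ρ σ : ℝ} (h1 : 0 < ρ) (h2 : ρ < 1) (h3 : 0 < σ) (h4 : σ < 1)
    (x y z : Fin n → Bool) :
    Real.log (bacPr ρ σ x y) - Real.log (bacPr ρ σ x z)
      = (mm x y z : ℝ) * (Real.log (1 - σ) - Real.log ρ)
        - (kk x y z : ℝ) * (Real.log (1 - ρ) - Real.log σ) := by
  have hne : ∀ (w : Fin n → Bool) (i : Fin n), i ∈ Finset.univ →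
      (if x i then (if w i then 1 - σ else ρ) else (if w i then σ else 1 - ρ)) ≠ 0 := by
    intro w i _
    rcases x i <;> rcases w i <;> simp <;> intro h <;> linarith
  unfold bacPr
  rw [Real.log_prod (hne y), Real.log_prod (hne z), ← Finset.sum_sub_distrib]
  unfold kk mm
  push_cast
  rw [Finset.sum_mul, Finset.sum_mul, ← Finset.sum_sub_distrib]
  apply Finset.sum_congr rfl
  intro i _
  rcases hx : x i <;> rcases hy : y i <;> rcases hz : z i <;> simp [hx, hy, hz] <;> ring

lemma bacPr_le_iff_s12 {n : ℕ} {ρ σ : ℝ} (h1 : 0 < ρ) (h2 : ρ < 1) (h3 : 0 < σ) (h4 : σ < 1)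
    (x y z : Fin n → Bool) :
    (bacPr ρ σ x y ≤ bacPr ρ σ x z ↔
      (mm x y z : ℝ) * (Real.log (1 - σ) - Real.log ρ)
        - (kk x y z : ℝ) * (Real.log (1 - ρ) - Real.log σ) ≤ 0) := by
  rw [← Real.log_le_log_iff (bacPr_pos_s12 h1 h2 h3 h4 x y) (bacPr_pos_s12 h1 h2 h3 h4 x z),
    ← sub_nonpos, log_diff h1 h2 h3 h4 x y z]

set_option maxHeartbeats 2000000 in
theorem stmt12 (p q : ℝ) (hpq : (p, q) ∈ bacT) :
    (∀ n : ℕ, 1 ≤ n → nStable n (p, q)) ↔ Irrational (bacS p q) := by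
  have hp0 : 0 ≤ p := hpq.1
  have hpq1 : p ≤ q := hpq.2.1
  have hsum : p + q < 1 := hpq.2.2.1
  have hne : (p, q) ≠ (0, 0) := hpq.2.2.2
  have hq0 : 0 < q := by
    rcases lt_or_eq_of_le (hp0.trans hpq1) with h | h
    · exact h
    · exfalso
      apply hne
      have hp' : p = 0 := le_antisymm (hpq1.trans h.symm.le) hp0
      rw [hp', ← h]
  have hq1 : q < 1 := by linarith
  have hp1 : p < 1 := lt_of_le_of_lt hpq1 hq1
  constructor
  · -- stability for all n implies irrationality, by contraposition
    intro hst
    by_contra hrat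
    obtain ⟨r, hr⟩ : bacS p q ∈ Set.range ((↑) : ℚ → ℝ) := not_not.mp hrat
    by_cases hp : p = 0
    · -- boundary case p = 0 : not 2-stable
      subst hp
      obtain ⟨ε, hε, hS⟩ := hst 2 (by norm_num)
      set t := min (ε/2) (min (q/2) ((1-q)/2)) with ht
      have ht0 : 0 < t := lt_min (by linarith) (lt_min (by linarith) (by linarith))
      have htε : t < ε := lt_of_le_of_lt (min_le_left _ _) (by linarith)
      have htq : t ≤ q/2 := le_trans (min_le_right _ _) (min_le_left _ _)
      have ht1q : t ≤ (1-q)/2 := le_trans (min_le_right _ _) (min_le_right _ _)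
      have hmem : ((t, q) : ℝ × ℝ) ∈ bacT := by
        refine ⟨ht0.le, by dsimp only; linarith, by dsimp only; linarith, ?_⟩
        exact fun h => (ne_of_gt hq0) (congrArg Prod.snd h)
      have hnorm : ‖((t, q) : ℝ × ℝ) - (0, q)‖ < ε := by
        have h1 : ((t, q) : ℝ × ℝ) - (0, q) = (t, 0) := by rw [Prod.mk_sub_mk]; norm_num
        rw [h1, Prod.norm_def]
        simp only [Real.norm_eq_abs, abs_of_pos ht0, abs_zero]
        rw [max_eq_left ht0.le]
        exact htε
      have hEq := hS (t, q) hmem hnorm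
      have h2 := (hEq (fun _ => true) (fun i => decide ((i:ℕ) = 1)) (fun _ => false)).mp
      norm_num [nEquiv, bacPr, Fin.prod_univ_two] at h2
      nlinarith [h2, ht0, ht1q]
    · have hppos : 0 < p := lt_of_le_of_ne hp0 (Ne.symm hp)
      by_cases hpe : p = q
      · -- boundary case p = q : not 2-stable
        obtain ⟨ε, hε, hS⟩ := hst 2 (by norm_num)
        set t := min (ε/2) (p/2) with ht
        have ht0 : 0 < t := lt_min (by linarith) (by linarith)
        have htε : t < ε := lt_of_le_of_lt (min_le_left _ _) (by linarith)
        have htp : t ≤ p/2 := min_le_right _ _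
        have hmem : ((p - t, q) : ℝ × ℝ) ∈ bacT := by
          refine ⟨by dsimp only; linarith, by dsimp only; linarith, by dsimp only; linarith, ?_⟩
          exact fun h => (ne_of_gt hq0) (congrArg Prod.snd h)
        have hnorm : ‖((p - t, q) : ℝ × ℝ) - (p, q)‖ < ε := by
          have h1 : ((p - t, q) : ℝ × ℝ) - (p, q) = (-t, 0) := by rw [Prod.mk_sub_mk]; norm_num
          rw [h1, Prod.norm_def]
          simp only [Real.norm_eq_abs, abs_neg, abs_of_pos ht0, abs_zero]
          rw [max_eq_left ht0.le]
          exact htε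
        have hEq := hS (p - t, q) hmem hnorm
        have h2 := (hEq (fun i => decide ((i:ℕ) = 1)) (fun _ => true) (fun _ => false)).mp
        norm_num [nEquiv, bacPr, Fin.prod_univ_two] at h2
        have hbase : q * (1 - q) ≤ (1 - p) * p := by rw [← hpe]; ring_nf; nlinarith [le_refl (p*(1-p))]
        have h3 := h2 hbase
        nlinarith [h3, ht0, htp, hsum, hpe]
      · -- interior case 0 < p < q with S rational
        have hplt : p < q := lt_of_le_of_ne hpq1 hpe
        set A := Real.log (1 - p) - Real.log q with hA_def
        set B := Real.log (1 - q) - Real.log p with hB_def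
        have hA : 0 < A := sub_pos.mpr (Real.log_lt_log hq0 (by linarith))
        have hB : 0 < B := sub_pos.mpr (Real.log_lt_log hppos (by linarith))
        have hrS : (r : ℝ) = A / B := by rw [hr, bacS, if_neg hp]
        have hrpos : 0 < (r : ℝ) := hrS ▸ div_pos hA hB
        have hnum : 0 < r.num := Rat.num_pos.mpr (by exact_mod_cast hrpos)
        set a := r.num.toNat with ha_def
        set b := r.den with hb_def
        have ha : 0 < a := by omega
        have hb : 0 < b := r.den_pos
        have hanr : ((a : ℤ) : ℝ) = (r.num : ℝ) := by
          rw [ha_def, Int.toNat_of_nonneg hnum.le]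
        have key : (b : ℝ) * A = (a : ℝ) * B := by
          have h1 : A = (r : ℝ) * B := by rw [hrS]; field_simp
          have h2 : (r : ℝ) * (b : ℝ) = (r.num : ℝ) := by
            rw [hb_def, Rat.cast_def]; field_simp
          calc (b : ℝ) * A = ((r : ℝ) * (b : ℝ)) * B := by rw [h1]; ring
            _ = (r.num : ℝ) * B := by rw [h2]
            _ = (a : ℝ) * B := by rw [← hanr]; norm_num
        obtain ⟨ε, hε, hS⟩ := hst (b + a) (by omega)
        set t := min (ε/2) ((q - p)/2) with ht
        have ht0 : 0 < t := lt_min (by linarith) (by linarith)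
        have htε : t < ε := lt_of_le_of_lt (min_le_left _ _) (by linarith)
        have htqp : t ≤ (q - p)/2 := min_le_right _ _
        have hmem : ((p + t, q - t) : ℝ × ℝ) ∈ bacT := by
          refine ⟨by dsimp only; linarith, by dsimp only; linarith, by dsimp only; linarith, ?_⟩
          exact fun h => (ne_of_gt (by linarith : (0:ℝ) < p + t)) (congrArg Prod.fst h)
        have hnorm : ‖((p + t, q - t) : ℝ × ℝ) - (p, q)‖ < ε := by
          have h1 : ((p + t, q - t) : ℝ × ℝ) - (p, q) = (t, -t) := by
            rw [Prod.mk_sub_mk]; norm_num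
          rw [h1, Prod.norm_def]
          simp only [Real.norm_eq_abs, abs_neg, abs_of_pos ht0]
          rw [max_self]
          exact htε
        have hEq := hS (p + t, q - t) hmem hnorm
        -- the three words
        have h2 := (hEq (fun i : Fin (b + a) => decide (b ≤ (i : ℕ))) (fun _ => false)
          (fun _ => true)).mp
        rw [bacPr_allfalse, bacPr_alltrue, bacPr_allfalse, bacPr_alltrue] at h2
        -- base point: exact tie
        have hbase : (1 - p) ^ b * p ^ a = q ^ b * (1 - q) ^ a := by
          have hlg : Real.log ((1 - p) ^ b * p ^ a) = Real.log (q ^ b * (1 - q) ^ a) := by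
            rw [Real.log_mul (pow_ne_zero _ (ne_of_gt (by linarith : (0:ℝ) < 1 - p)))
                (pow_ne_zero _ hppos.ne'),
              Real.log_mul (pow_ne_zero _ hq0.ne')
                (pow_ne_zero _ (ne_of_gt (by linarith : (0:ℝ) < 1 - q))),
              Real.log_pow, Real.log_pow, Real.log_pow, Real.log_pow]
            rw [hA_def, hB_def] at key
            push_cast
            push_cast at key
            linarith [key]
          have hc := congrArg Real.exp hlg
          rwa [Real.exp_log (mul_pos (pow_pos (by linarith : (0:ℝ) < 1 - p) b)
              (pow_pos hppos a)),
            Real.exp_log (mul_pos (pow_pos hq0 b)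
              (pow_pos (by linarith : (0:ℝ) < 1 - q) a))] at hc
        -- perturbed point: strict inequality the other way
        have hstrict : (q - t) ^ b * (1 - (q - t)) ^ a < (1 - (p + t)) ^ b * (p + t) ^ a := by
          have hpt1 : p + t < 1 := by linarith
          have hqt0 : 0 < q - t := by linarith
          rw [← Real.log_lt_log_iff
              (mul_pos (pow_pos hqt0 b) (pow_pos (by linarith : (0:ℝ) < 1 - (q - t)) a))
              (mul_pos (pow_pos (by linarith : (0:ℝ) < 1 - (p + t)) b)
                (pow_pos (by linarith : (0:ℝ) < p + t) a)),
            Real.log_mul (pow_ne_zero _ hqt0.ne')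
              (pow_ne_zero _ (ne_of_gt (by linarith : (0:ℝ) < 1 - (q - t)))),
            Real.log_mul (pow_ne_zero _ (ne_of_gt (by linarith : (0:ℝ) < 1 - (p + t))))
              (pow_ne_zero _ (ne_of_gt (by linarith : (0:ℝ) < p + t))),
            Real.log_pow, Real.log_pow, Real.log_pow, Real.log_pow]
          have c1 : Real.log (q - t) - Real.log q < Real.log (1 - p - t) - Real.log (1 - p) := by
            have hr1 : (q - t)/q < (1 - p - t)/(1 - p) := by
              rw [div_lt_div_iff₀ hq0 (by linarith : (0:ℝ) < 1 - p)]
              nlinarith [ht0, hsum]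
            have hl := Real.log_lt_log (div_pos hqt0 hq0) hr1
            rwa [Real.log_div hqt0.ne' hq0.ne',
              Real.log_div (ne_of_gt (by linarith : (0:ℝ) < 1 - p - t)) (ne_of_gt (by linarith : (0:ℝ) < 1 - p))] at hl
          have c2 : Real.log (1 - q + t) - Real.log (1 - q)
              < Real.log (p + t) - Real.log p := by
            have hr2 : (1 - q + t)/(1 - q) < (p + t)/p := by
              rw [div_lt_div_iff₀ (by linarith : (0:ℝ) < 1 - q) hppos]
              nlinarith [ht0, hsum]
            have hl := Real.log_lt_log (div_pos (by linarith) (by linarith)) hr2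
            rwa [Real.log_div (ne_of_gt (by linarith : (0:ℝ) < 1 - q + t)) (ne_of_gt (by linarith : (0:ℝ) < 1 - q)),
              Real.log_div (ne_of_gt (by linarith : (0:ℝ) < p + t)) hppos.ne'] at hl
          have hbR : (0:ℝ) < (b : ℝ) := by exact_mod_cast hb
          have haR : (0:ℝ) < (a : ℝ) := by exact_mod_cast ha
          have hc1 := mul_lt_mul_of_pos_left c1 hbR
          have hc2 := mul_lt_mul_of_pos_left c2 haR
          rw [hA_def, hB_def] at key
          have e1 : (1:ℝ) - (q - t) = 1 - q + t := by ring
          have e2 : (1:ℝ) - (p + t) = 1 - p - t := by ring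
          rw [e1, e2]
          nlinarith [hc1, hc2, key]
        have h3 := h2 (le_of_eq hbase)
        linarith [h3, hstrict]
  · -- irrationality implies stability for every n
    intro hirr n _hn
    have hppos : 0 < p := by
      rcases lt_or_eq_of_le hp0 with h | h
      · exact h
      · exfalso
        exact hirr ⟨0, by rw [bacS, if_pos h.symm]; simp⟩
    have hplt : p < q := by
      rcases lt_or_eq_of_le hpq1 with h | h
      · exact h
      · exfalso
        refine hirr ⟨1, ?_⟩
        rw [bacS, if_neg hppos.ne', ← h]
        have hne0 : Real.log (1 - p) - Real.log p ≠ 0 :=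
          sub_ne_zero.mpr (ne_of_gt (Real.log_lt_log hppos (by linarith)))
        rw [div_self hne0]
        norm_num
    set A := Real.log (1 - p) - Real.log q with hA_def
    set B := Real.log (1 - q) - Real.log p with hB_def
    have hA : 0 < A := sub_pos.mpr (Real.log_lt_log hq0 (by linarith))
    have hB : 0 < B := sub_pos.mpr (Real.log_lt_log hppos (by linarith))
    set hh : ℤ × ℤ → ℝ × ℝ → ℝ := fun km w =>
      (km.2 : ℝ) * (Real.log (1 - w.2) - Real.log w.1)
        - (km.1 : ℝ) * (Real.log (1 - w.1) - Real.log w.2) with hh_def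
    have hd_ne : ∀ km : ℤ × ℤ, km ≠ (0, 0) → hh km (p, q) ≠ 0 := by
      rintro ⟨k, m⟩ hne0 h0
      simp only [hh_def] at h0
      by_cases hk : k = 0
      · subst hk
        simp only [Int.cast_zero, zero_mul, sub_zero] at h0
        rcases mul_eq_zero.mp h0 with hm | hc
        · exact hne0 (by rw [Prod.mk.injEq]; exact ⟨rfl, by exact_mod_cast hm⟩)
        · rw [hB_def] at hB; linarith [hB, hc.le, hc.ge]
      · refine hirr ⟨(m : ℚ) / (k : ℚ), ?_⟩
        rw [bacS, if_neg hppos.ne']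
        push_cast
        rw [div_eq_div_iff (by exact_mod_cast hk : ((k:ℝ)) ≠ 0)
          (by rw [hB_def] at hB; exact ne_of_gt hB)]
        linear_combination h0
    have hcont : ∀ km : ℤ × ℤ, ContinuousAt (hh km) (p, q) := by
      intro km
      have l1 : ContinuousAt (fun w : ℝ × ℝ => Real.log w.1) (p, q) :=
        continuousAt_fst.log hppos.ne'
      have l2 : ContinuousAt (fun w : ℝ × ℝ => Real.log w.2) (p, q) :=
        continuousAt_snd.log hq0.ne'
      have l3 : ContinuousAt (fun w : ℝ × ℝ => Real.log (1 - w.1)) (p, q) :=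
        ((continuous_const.sub continuous_fst).continuousAt).log
          (ne_of_gt (by show (0:ℝ) < 1 - p; linarith))
      have l4 : ContinuousAt (fun w : ℝ × ℝ => Real.log (1 - w.2)) (p, q) :=
        ((continuous_const.sub continuous_snd).continuousAt).log
          (ne_of_gt (by show (0:ℝ) < 1 - q; linarith))
      exact (continuousAt_const.mul (l4.sub l1)).sub (continuousAt_const.mul (l3.sub l2))
    set F : Finset (ℤ × ℤ) :=
      (Finset.Icc (-(n:ℤ)) (n:ℤ)) ×ˢ (Finset.Icc (-(n:ℤ)) (n:ℤ)) with hF_def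
    have ev1 : ∀ᶠ w : ℝ × ℝ in nhds (p, q), 0 < w.1 :=
      (isOpen_lt continuous_const continuous_fst).eventually_mem hppos
    have ev2 : ∀ᶠ w : ℝ × ℝ in nhds (p, q), ∀ km ∈ F,
        (0 < hh km (p, q) → 0 < hh km w) ∧ (hh km (p, q) < 0 → hh km w < 0) := by
      rw [Filter.eventually_all_finset]
      intro km _
      by_cases h0 : km = (0, 0)
      · subst h0
        refine Filter.Eventually.of_forall (fun w => ?_)
        norm_num [hh_def]
      · have hd := hd_ne km h0
        have hev := (hcont km) (Metric.ball_mem_nhds (hh km (p, q)) (abs_pos.mpr hd))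
        filter_upwards [hev] with w hw
        have hw' : dist (hh km w) (hh km (p, q)) < |hh km (p, q)| := hw
        rw [Real.dist_eq] at hw'
        rcases abs_sub_lt_iff.mp hw' with ⟨hw1, hw2⟩
        constructor
        · intro hpos
          rw [abs_of_pos hpos] at hw2
          linarith
        · intro hneg
          rw [abs_of_neg hneg] at hw1
          linarith
    have hcomb := ev1.and ev2
    rw [Metric.eventually_nhds_iff] at hcomb
    obtain ⟨ε, hε, hball⟩ := hcomb
    refine ⟨ε, hε, ?_⟩
    rintro ⟨p', q'⟩ hmem' hnrm
    have hp0' : 0 ≤ p' := hmem'.1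
    have hpq1' : p' ≤ q' := hmem'.2.1
    have hsum' : p' + q' < 1 := hmem'.2.2.1
    have hprops := hball (show dist ((p', q') : ℝ × ℝ) (p, q) < ε by rwa [dist_eq_norm])
    obtain ⟨hp'pos, hsign⟩ := hprops
    have hq'pos : 0 < q' := lt_of_lt_of_le hp'pos hpq1'
    have hq'1 : q' < 1 := by linarith
    have hp'1 : p' < 1 := lt_of_le_of_lt hpq1' hq'1
    intro x y z
    simp only
    rw [bacPr_le_iff_s12 hppos hp1 hq0 hq1 x y z, bacPr_le_iff_s12 hp'pos hp'1 hq'pos hq'1 x y z]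
    set k := kk x y z with hk_def
    set m := mm x y z with hm_def
    by_cases h0 : ((k, m) : ℤ × ℤ) = (0, 0)
    · rw [Prod.mk.injEq] at h0
      rw [h0.1, h0.2]
      norm_num
    · have hmemF : ((k, m) : ℤ × ℤ) ∈ F := by
        rw [hF_def, Finset.mem_product]
        constructor
        · exact Finset.mem_Icc.mpr (abs_le.mp (kk_bound x y z))
        · exact Finset.mem_Icc.mpr (abs_le.mp (mm_bound x y z))
      have hs := hsign (k, m) hmemF
      have hd := hd_ne (k, m) h0
      simp only [hh_def] at hs hd
      constructor
      · intro hle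
        exact (hs.2 (lt_of_le_of_ne hle hd)).le
      · intro hle'
        by_contra hgt
        push_neg at hgt
        have := hs.1 hgt
        linarith
end

section
/- Let X be a nonempty finite set, n ≥ 1, and let W₁, W₂ : X × X → ℝ be two channels; for x, y ∈ Xⁿ set Pr_{Wᵢ}(x|y) = ∏_{j=1}^n Wᵢ(x_j, y_j). The following are equivalent: (i) for every nonempty subset C ⊆ Xⁿ and every x ∈ Xⁿ, the set {c ∈ C : Pr_{W₁}(x|c') ≤ Pr_{W₁}(x|c) for all c' ∈ C} equals the set {c ∈ C : Pr_{W₂}(x|c') ≤ Pr_{W₂}(x|c) for all c' ∈ C}; (ii) for all x, y, z ∈ Xⁿ, Pr_{W₁}(x|y) ≤ Pr_{W₁}(x|z) if and only if Pr_{W₂}(x|y) ≤ Pr_{W₂}(x|z); (iii) for all x, y ∈ Xⁿ, the cardinality of {z ∈ Xⁿ : Pr_{W₁}(x|z) < Pr_{W₁}(x|y)} equals the cardinality of {z ∈ Xⁿ : Pr_{W₂}(x|z) < Pr_{W₂}(x|y)}. -/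
/-!
All three conditions only depend on the preorders that `prW W₁ x` and `prW W₂ x` induce on `Xⁿ`.
Maximizers over the two-point sets `{y, z}` recover the preorder, and on a finite set the rank
`#{z | f z < f y}` of `y` determines the comparison of `f y` with any other value of `f`.
-/

/-- Transition probability of the `n`-fold extension of a discrete memoryless
channel `W` with finite alphabet `X`: `prW W x y = Pr_W(x|y)`. -/
noncomputable def prW {X : Type*} (W : X → X → ℝ) {n : ℕ} (x y : Fin n → X) : ℝ :=
  ∏ j, W (x j) (y j)

theorem maximizers_eq_iff_le_iff_le {α β γ : Type*} [Preorder β] [Preorder γ]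
    (f : α → β) (g : α → γ) :
    (∀ C : Set α, C.Nonempty →
        {c ∈ C | ∀ c' ∈ C, f c' ≤ f c} = {c ∈ C | ∀ c' ∈ C, g c' ≤ g c}) ↔
      ∀ y z, (f y ≤ f z ↔ g y ≤ g z) := by
  refine ⟨fun h y z => ?_, fun h C _ => ?_⟩
  · have hyz := Set.ext_iff.1 (h {y, z} (Set.insert_nonempty y {z})) z
    simpa using hyz
  · ext c
    exact and_congr_right fun _ => forall₂_congr fun c' _ => h c' c

theorem ncard_setOf_lt_le_ncard_setOf_lt_iff {α β : Type*} [Finite α] [LinearOrder β]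
    (f : α → β) (y z : α) :
    {w | f w < f y}.ncard ≤ {w | f w < f z}.ncard ↔ f y ≤ f z := by
  refine ⟨fun h => ?_, fun h => Set.ncard_le_ncard (fun w hw => lt_of_lt_of_le hw h)⟩
  by_contra! hzy
  have hssubset : {w | f w < f z} ⊂ {w | f w < f y} :=
    Set.ssubset_iff_of_subset (fun w hw => lt_trans hw hzy) |>.2 ⟨z, hzy, lt_irrefl _⟩
  exact (Set.ncard_lt_ncard hssubset).not_ge h

theorem le_iff_le_iff_ncard_setOf_lt_eq {α β γ : Type*} [Finite α] [LinearOrder β]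
    [LinearOrder γ] (f : α → β) (g : α → γ) :
    (∀ y z, (f y ≤ f z ↔ g y ≤ g z)) ↔
      ∀ y, {z | f z < f y}.ncard = {z | g z < g y}.ncard := by
  refine ⟨fun h y => ?_, fun h y z => ?_⟩
  · simp only [← not_le, h y]
  · rw [← ncard_setOf_lt_le_ncard_setOf_lt_iff f, ← ncard_setOf_lt_le_ncard_setOf_lt_iff g,
      h y, h z]

theorem stmt14_general {X : Type*} [Fintype X] (n : ℕ)
    (W₁ W₂ : X → X → ℝ) :
    ((∀ C : Set (Fin n → X), C.Nonempty → ∀ x : Fin n → X,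
        {c ∈ C | ∀ c' ∈ C, prW W₁ x c' ≤ prW W₁ x c} =
        {c ∈ C | ∀ c' ∈ C, prW W₂ x c' ≤ prW W₂ x c}) ↔
      (∀ x y z : Fin n → X, (prW W₁ x y ≤ prW W₁ x z ↔ prW W₂ x y ≤ prW W₂ x z))) ∧
    ((∀ x y z : Fin n → X, (prW W₁ x y ≤ prW W₁ x z ↔ prW W₂ x y ≤ prW W₂ x z)) ↔
      (∀ x y : Fin n → X,
        {z : Fin n → X | prW W₁ x z < prW W₁ x y}.ncard =
        {z : Fin n → X | prW W₂ x z < prW W₂ x y}.ncard)) := by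
  refine ⟨⟨fun h x => ?_, fun h C hC x => ?_⟩,
    forall_congr' fun x => le_iff_le_iff_ncard_setOf_lt_eq _ _⟩
  · exact (maximizers_eq_iff_le_iff_le _ _).1 fun C hC => h C hC x
  · exact (maximizers_eq_iff_le_iff_le _ _).2 (h x) C hC

theorem stmt14 {X : Type*} [Fintype X] [Nonempty X] (n : ℕ) (hn : 1 ≤ n)
    (W₁ W₂ : X → X → ℝ) :
    ((∀ C : Set (Fin n → X), C.Nonempty → ∀ x : Fin n → X,
        {c ∈ C | ∀ c' ∈ C, prW W₁ x c' ≤ prW W₁ x c} =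
        {c ∈ C | ∀ c' ∈ C, prW W₂ x c' ≤ prW W₂ x c}) ↔
      (∀ x y z : Fin n → X, (prW W₁ x y ≤ prW W₁ x z ↔ prW W₂ x y ≤ prW W₂ x z))) ∧
    ((∀ x y z : Fin n → X, (prW W₁ x y ≤ prW W₁ x z ↔ prW W₂ x y ≤ prW W₂ x z)) ↔
      (∀ x y : Fin n → X,
        {z : Fin n → X | prW W₁ x z < prW W₁ x y}.ncard =
        {z : Fin n → X | prW W₂ x z < prW W₂ x y}.ncard)) :=
  stmt14_general n W₁ W₂
end

section
/- Let p, q ∈ (0,1) and n ≥ 1, and consider the n-fold binary asymmetric channel with transition probabilities Pr_{p,q}. Then: (1) p + q < 1 if and only if Pr_{p,q}(x|x) > Pr_{p,q}(x|y) for all x, y ∈ {0,1}^n with y ≠ x; (2) p + q > 1 if and only if Pr_{p,q}(x|x) < Pr_{p,q}(x|y) for all x, y ∈ {0,1}^n with y ≠ x; (3) p + q = 1 if and only if Pr_{p,q}(x|x) = Pr_{p,q}(x|y) for all x, y ∈ {0,1}^n. -/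
open Real Set

/-!
Both letters lose the same amount when they are not transmitted faithfully:
`Pr(0|0) - Pr(0|1) = (1 - p) - q` and `Pr(1|1) - Pr(1|0) = (1 - q) - p` are both `1 - (p + q)`.
So, comparing `Pr(x|x)` and `Pr(x|y)` factor by factor, every coordinate where `y` differs from
`x` moves the product in the direction of the sign of `1 - (p + q)`, and the others leave it alone.
-/

section

variable {p q : ℝ} {n : ℕ}

noncomputable def bacLetter (p q : ℝ) (a b : Bool) : ℝ :=
  if a then (if b then 1 - q else p) else (if b then q else 1 - p)

lemma bacPr_eq_prod_bacLetter (x y : Fin n → Bool) :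
    bacPr p q x y = ∏ i, bacLetter p q (x i) (y i) := rfl

lemma bacLetter_pos (hp : p ∈ Ioo (0 : ℝ) 1) (hq : q ∈ Ioo (0 : ℝ) 1) (a b : Bool) :
    0 < bacLetter p q a b := by
  obtain ⟨hp0, hp1⟩ := hp
  obtain ⟨hq0, hq1⟩ := hq
  cases a <;> cases b <;> simp only [bacLetter] <;> norm_num <;> linarith

lemma bacLetter_self_sub (p q : ℝ) (a b : Bool) :
    bacLetter p q a a - bacLetter p q a b = if b = a then 0 else 1 - (p + q) := by
  cases a <;> cases b <;> simp only [bacLetter] <;> norm_num <;> ring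

lemma bacPr_lt_bacPr_self (hp : p ∈ Ioo (0 : ℝ) 1) (hq : q ∈ Ioo (0 : ℝ) 1) (h : p + q < 1)
    {x y : Fin n → Bool} (hyx : y ≠ x) : bacPr p q x y < bacPr p q x x := by
  obtain ⟨i, hi⟩ := Function.ne_iff.mp hyx
  rw [bacPr_eq_prod_bacLetter, bacPr_eq_prod_bacLetter]
  refine Finset.prod_lt_prod (fun j _ => bacLetter_pos hp hq _ _) (fun j _ => ?_)
    ⟨i, Finset.mem_univ i, ?_⟩
  · have := bacLetter_self_sub p q (x j) (y j)
    split_ifs at this <;> linarith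
  · have := bacLetter_self_sub p q (x i) (y i)
    rw [if_neg hi] at this
    linarith

lemma bacPr_self_lt_bacPr (hp : p ∈ Ioo (0 : ℝ) 1) (hq : q ∈ Ioo (0 : ℝ) 1) (h : 1 < p + q)
    {x y : Fin n → Bool} (hyx : y ≠ x) : bacPr p q x x < bacPr p q x y := by
  obtain ⟨i, hi⟩ := Function.ne_iff.mp hyx
  rw [bacPr_eq_prod_bacLetter, bacPr_eq_prod_bacLetter]
  refine Finset.prod_lt_prod (fun j _ => bacLetter_pos hp hq _ _) (fun j _ => ?_)
    ⟨i, Finset.mem_univ i, ?_⟩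
  · have := bacLetter_self_sub p q (x j) (y j)
    split_ifs at this <;> linarith
  · have := bacLetter_self_sub p q (x i) (y i)
    rw [if_neg hi] at this
    linarith

lemma bacPr_self_eq_bacPr (h : p + q = 1) (x y : Fin n → Bool) :
    bacPr p q x x = bacPr p q x y := by
  rw [bacPr_eq_prod_bacLetter, bacPr_eq_prod_bacLetter]
  refine Finset.prod_congr rfl fun j _ => ?_
  have := bacLetter_self_sub p q (x j) (y j)
  split_ifs at this <;> linarith

end

theorem stmt15 (p q : ℝ) (hp : p ∈ Set.Ioo (0 : ℝ) 1) (hq : q ∈ Set.Ioo (0 : ℝ) 1)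
    (n : ℕ) (hn : 1 ≤ n) :
    (p + q < 1 ↔ ∀ x y : Fin n → Bool, y ≠ x → bacPr p q x y < bacPr p q x x) ∧
    (p + q > 1 ↔ ∀ x y : Fin n → Bool, y ≠ x → bacPr p q x x < bacPr p q x y) ∧
    (p + q = 1 ↔ ∀ x y : Fin n → Bool, bacPr p q x x = bacPr p q x y) := by
  have : Nonempty (Fin n) := ⟨⟨0, hn⟩⟩
  obtain ⟨x₀, y₀, hne⟩ := exists_pair_ne (Fin n → Bool)
  rcases lt_trichotomy (p + q) 1 with h | h | h
  · have hlt := bacPr_lt_bacPr_self hp hq h hne.symm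
    refine ⟨iff_of_true h fun x y => bacPr_lt_bacPr_self hp hq h,
      iff_of_false (by linarith) fun h' => (h' x₀ y₀ hne.symm).not_gt hlt,
      iff_of_false h.ne fun h' => hlt.ne' (h' x₀ y₀)⟩
  · have heq := bacPr_self_eq_bacPr (p := p) (q := q) h x₀ y₀
    refine ⟨iff_of_false h.not_lt fun h' => (h' x₀ y₀ hne.symm).ne' heq,
      iff_of_false h.not_gt fun h' => (h' x₀ y₀ hne.symm).ne heq,
      iff_of_true h fun x y => bacPr_self_eq_bacPr h x y⟩
  · have hgt := bacPr_self_lt_bacPr hp hq h hne.symm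
    refine ⟨iff_of_false (by linarith) fun h' => (h' x₀ y₀ hne.symm).not_gt hgt,
      iff_of_true h fun x y => bacPr_self_lt_bacPr hp hq h,
      iff_of_false h.ne' fun h' => hgt.ne (h' x₀ y₀)⟩
end

section
/- The two-dimensional Lebesgue measure of the region {(p,q) ∈ T : 0 < S(p,q) < 1/2} equals 1/3 − √3·π/27, and the two-dimensional Lebesgue measure of the region {(p,q) ∈ T : 0 < S(p,q) < 1/3} equals 3/8 − 3π/32. -/
open Real Set

namespace BacAux

open MeasureTheory

/-! ### The affine change of variables `(p,q) ↦ (s,d) = (1-p+q, 1-p-q)` -/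

noncomputable def Lmap : ℝ × ℝ →ₗ[ℝ] ℝ × ℝ where
  toFun x := (-x.1 + x.2, -x.1 - x.2)
  map_add' x y := by simp [Prod.ext_iff]; constructor <;> ring
  map_smul' c x := by simp [Prod.ext_iff, smul_eq_mul]; constructor <;> ring

lemma det_Lmap : LinearMap.det Lmap = 2 := by
  rw [← LinearMap.det_toMatrix (Module.Basis.finTwoProd ℝ), Matrix.det_fin_two]
  simp [LinearMap.toMatrix_apply, Lmap, Module.Basis.finTwoProd]
  norm_num

noncomputable def phi : ℝ × ℝ → ℝ × ℝ := fun x => (1 - x.1 + x.2, 1 - x.1 - x.2)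

lemma vol_phi_preimage (E : Set (ℝ × ℝ)) :
    volume (phi ⁻¹' E) = ENNReal.ofReal 2⁻¹ * volume E := by
  have hphi : phi = (fun y => y + ((1 : ℝ), (1 : ℝ))) ∘ Lmap := by
    funext x
    simp [phi, Lmap, Prod.ext_iff, LinearMap.coe_mk, AddHom.coe_mk]
    constructor <;> ring
  rw [hphi, Set.preimage_comp,
    Measure.addHaar_preimage_linearMap volume (by rw [det_Lmap]; norm_num),
    measure_preimage_add_right, det_Lmap]
  norm_num [abs_of_nonneg]

/-! ### Area of regions of the form `{(s,d) | 1 ≤ s, g s < d < 2 - s}` -/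

lemma volE (g : ℝ → ℝ) (hc : Continuous g) (h0 : ∀ s, 0 ≤ g s)
    (hb : ∀ s ∈ Icc (1:ℝ) 2, g s ≤ 2 - s) (A : ℝ)
    (hA : ∫ s in (1:ℝ)..2, (2 - s - g s) = A) :
    volume {sd : ℝ × ℝ | 1 ≤ sd.1 ∧ g sd.1 < sd.2 ∧ sd.2 < 2 - sd.1}
      = ENNReal.ofReal A := by
  set E : Set (ℝ × ℝ) := {sd : ℝ × ℝ | 1 ≤ sd.1 ∧ g sd.1 < sd.2 ∧ sd.2 < 2 - sd.1} with hE
  have hEm : MeasurableSet E := by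
    have : E = {sd : ℝ × ℝ | 1 ≤ sd.1} ∩ ({sd : ℝ × ℝ | g sd.1 < sd.2}
        ∩ {sd : ℝ × ℝ | sd.2 < 2 - sd.1}) := by
      ext x; simp [hE, mem_setOf_eq, and_assoc]
    rw [this]
    exact (measurableSet_le measurable_const measurable_fst).inter
      ((measurableSet_lt (hc.comp continuous_fst).measurable measurable_snd).inter
        (measurableSet_lt measurable_snd
          ((continuous_const.sub continuous_fst).measurable)))
  rw [Measure.volume_eq_prod, Measure.prod_apply hEm]
  have hfun : (fun s => (volume : Measure ℝ) (Prod.mk s ⁻¹' E))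
      = (Ici (1:ℝ)).indicator (fun s => ENNReal.ofReal (2 - s - g s)) := by
    funext s
    rcases le_or_gt 1 s with h | h
    · have hsec : Prod.mk s ⁻¹' E = Ioo (g s) (2 - s) := by
        ext d; simp [hE, mem_setOf_eq, h, mem_Ioo]
      rw [hsec, Real.volume_Ioo, indicator_of_mem (mem_Ici.2 h)]
    · have hsec : Prod.mk s ⁻¹' E = ∅ := by
        ext d; simp [hE, mem_setOf_eq, h.not_ge]
      rw [hsec, measure_empty, indicator_of_notMem (by simpa [mem_Ici] using h.not_ge)]
  rw [hfun, lintegral_indicator measurableSet_Ici,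
    show Ici (1:ℝ) = Ico 1 2 ∪ Ici 2 from (Ico_union_Ici_eq_Ici (by norm_num)).symm,
    lintegral_union measurableSet_Ici
      (by rw [Set.disjoint_left]; rintro x ⟨_, h2⟩ h2'; exact absurd (mem_Ici.mp h2') (not_le.2 h2))]
  have h2 : ∫⁻ s in Ici (2:ℝ), ENNReal.ofReal (2 - s - g s) = 0 := by
    rw [setLIntegral_congr_fun_ae measurableSet_Ici
      (Filter.Eventually.of_forall (fun s hs => ?_)), lintegral_zero]
    exact ENNReal.ofReal_eq_zero.2 (by have := h0 s; have h2s : (2:ℝ) ≤ s := hs; linarith)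
  have h1 : ∫⁻ s in Ico (1:ℝ) 2, ENNReal.ofReal (2 - s - g s) = ENNReal.ofReal A := by
    rw [← ofReal_integral_eq_lintegral_ofReal]
    · congr 1
      rw [← hA, intervalIntegral.integral_of_le (by norm_num),
        MeasureTheory.integral_Ico_eq_integral_Ioo, MeasureTheory.integral_Ioc_eq_integral_Ioo]
    · exact (((continuous_const.sub continuous_id).sub hc).integrableOn_Icc).mono_set
        Ico_subset_Icc_self
    · exact (ae_restrict_iff' measurableSet_Ico).2
        (Filter.Eventually.of_forall (fun s hs => by
          have := hb s ⟨hs.1, hs.2.le⟩; simp; linarith))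
  rw [h1, h2, add_zero]

/-! ### The BAC inequality in polynomial form -/

lemma bacS_pos (p q : ℝ) (hp : 0 < p) (hpq : p ≤ q) (h1 : p + q < 1) :
    0 < bacS p q := by
  have hq : 0 < q := lt_of_lt_of_le hp hpq
  have hq1 : q < 1 - p := by linarith
  have hp1 : p < 1 - q := by linarith
  rw [bacS, if_neg hp.ne']
  exact div_pos (by linarith [Real.log_lt_log hq hq1]) (by linarith [Real.log_lt_log hp hp1])

lemma bacS_lt_iff (p q : ℝ) (hp : 0 < p) (hpq : p ≤ q) (h1 : p + q < 1) (n : ℕ) (hn : 0 < n) :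
    (bacS p q < 1 / n ↔ (1 - p) ^ n * p < q ^ n * (1 - q)) := by
  have hq : 0 < q := lt_of_lt_of_le hp hpq
  have hq1 : q < 1 - p := by linarith
  have hp1 : p < 1 - q := by linarith
  have h1p : (0:ℝ) < 1 - p := lt_trans hq hq1
  have h1q : (0:ℝ) < 1 - q := lt_trans hp hp1
  have hD : 0 < Real.log (1 - q) - Real.log p := by linarith [Real.log_lt_log hp hp1]
  have hnR : (0:ℝ) < (n:ℝ) := by exact_mod_cast hn
  rw [bacS, if_neg hp.ne', div_lt_div_iff₀ hD hnR]
  have key : (Real.log (1 - p) - Real.log q) * n < Real.log (1 - q) - Real.log p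
      ↔ Real.log ((1 - p) ^ n * p) < Real.log (q ^ n * (1 - q)) := by
    rw [Real.log_mul (by positivity) hp.ne', Real.log_mul (by positivity) h1q.ne',
      Real.log_pow, Real.log_pow]
    constructor <;> intro h <;> nlinarith
  rw [one_mul, key,
    Real.log_lt_log_iff (by positivity) (by positivity)]

/-! ### Region 1 : `S < 1/2` -/

noncomputable def g1 : ℝ → ℝ := fun s => Real.sqrt (4 * s - 3 * s ^ 2)

lemma g1_cont : Continuous g1 :=
  Real.continuous_sqrt.comp (by continuity)

lemma g1_nonneg (s : ℝ) : 0 ≤ g1 s := Real.sqrt_nonneg _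

lemma g1_le (s : ℝ) (hs : s ∈ Icc (1:ℝ) 2) : g1 s ≤ 2 - s := by
  have h2 : (0:ℝ) ≤ 2 - s := by linarith [hs.2]
  have : (4 * s - 3 * s ^ 2) ≤ (2 - s) ^ 2 := by nlinarith [sq_nonneg (s - 1)]
  calc g1 s ≤ Real.sqrt ((2 - s) ^ 2) := Real.sqrt_le_sqrt this
    _ = 2 - s := Real.sqrt_sq h2

lemma set1_eq :
    {pq : ℝ × ℝ | pq ∈ bacT ∧ 0 < bacS pq.1 pq.2 ∧ bacS pq.1 pq.2 < 1 / 2}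
      = phi ⁻¹' {sd : ℝ × ℝ | 1 ≤ sd.1 ∧ g1 sd.1 < sd.2 ∧ sd.2 < 2 - sd.1} := by
  ext ⟨p, q⟩
  simp only [mem_setOf_eq, mem_preimage, phi, bacT]
  constructor
  · rintro ⟨⟨hp0, hpq, h1, hne⟩, hS0, hS⟩
    have hp : 0 < p := by
      rcases hp0.lt_or_eq with h | h
      · exact h
      · exfalso; rw [bacS, if_pos h.symm] at hS0; exact lt_irrefl 0 hS0
    have hpoly : (1 - p) ^ 2 * p < q ^ 2 * (1 - q) :=
      (bacS_lt_iff p q hp hpq h1 2 (by norm_num)).1 (by exact_mod_cast hS)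
    refine ⟨by linarith, ?_, by linarith⟩
    have hd : 0 < 1 - p - q := by linarith
    have hh : 0 < p ^ 2 - p * q - p + q ^ 2 := by
      by_contra hcon
      push_neg at hcon
      nlinarith [mul_nonpos_of_nonneg_of_nonpos hd.le hcon]
    have : 4 * (1 - p + q) - 3 * (1 - p + q) ^ 2 < (1 - p - q) ^ 2 := by nlinarith
    calc g1 (1 - p + q) < 1 - p - q := (Real.sqrt_lt' hd).2 (by nlinarith)
      _ = 1 - p - q := rfl
  · rintro ⟨hs, hgd, hd2⟩
    have hp : 0 < p := by linarith
    have hpq : p ≤ q := by linarith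
    have hd : 0 < 1 - p - q := lt_of_le_of_lt (g1_nonneg _) hgd
    have h1 : p + q < 1 := by linarith
    have hsq : 4 * (1 - p + q) - 3 * (1 - p + q) ^ 2 < (1 - p - q) ^ 2 :=
      (Real.sqrt_lt' hd).1 hgd
    have hh : 0 < p ^ 2 - p * q - p + q ^ 2 := by nlinarith
    have hpoly : (1 - p) ^ 2 * p < q ^ 2 * (1 - q) := by nlinarith
    refine ⟨⟨hp.le, hpq, h1, by simp [Prod.ext_iff]; intro h; exact absurd h hp.ne'⟩,
      bacS_pos p q hp hpq h1, ?_⟩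
    have := (bacS_lt_iff p q hp hpq h1 2 (by norm_num)).2 hpoly
    exact_mod_cast this

lemma integral1 : ∫ s in (1:ℝ)..(4/3 : ℝ), g1 s = 2 * Real.sqrt 3 * π / 27 - 1 / 6 := by
  set F : ℝ → ℝ := fun s =>
    (3 * s - 2) / 6 * Real.sqrt (4 * s - 3 * s ^ 2)
      + 2 * Real.sqrt 3 / 9 * Real.arcsin ((3 * s - 2) / 2) with hF
  have hcont : ContinuousOn F (Icc 1 (4/3)) := by
    apply ContinuousOn.add
    · exact (ContinuousOn.mul (by fun_prop) ((Real.continuous_sqrt.comp (by continuity)).continuousOn))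
    · exact ContinuousOn.mul (by fun_prop) ((Real.continuous_arcsin.comp (by continuity)).continuousOn)
  have hderiv : ∀ s ∈ Ioo (1:ℝ) (4/3), HasDerivAt F (g1 s) s := by
    intro s hs
    obtain ⟨hs1, hs2⟩ := hs
    have hu : 0 < 4 * s - 3 * s ^ 2 := by nlinarith
    set r := Real.sqrt (4 * s - 3 * s ^ 2) with hr
    have hrpos : 0 < r := Real.sqrt_pos.2 hu
    have hr2 : r ^ 2 = 4 * s - 3 * s ^ 2 := Real.sq_sqrt hu.le
    have hsqrt : HasDerivAt (fun s : ℝ => Real.sqrt (4 * s - 3 * s ^ 2))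
        ((4 - 6 * s) / (2 * r)) s := by
      have hpoly : HasDerivAt (fun s : ℝ => 4 * s - 3 * s ^ 2) (4 - 6 * s) s := by
        have h1 : HasDerivAt (fun s : ℝ => 4 * s) 4 s := by
          simpa using (hasDerivAt_id s).const_mul (4:ℝ)
        have h2 : HasDerivAt (fun s : ℝ => 3 * s ^ 2) (3 * (2 * s)) s := by
          simpa using ((hasDerivAt_pow 2 s).const_mul (3:ℝ))
        exact (h1.sub h2).congr_deriv (by ring)
      exact hpoly.sqrt hu.ne'
    have hlin : HasDerivAt (fun s : ℝ => (3 * s - 2) / 6) (1 / 2) s := by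
      have h1 : HasDerivAt (fun s : ℝ => 3 * s - 2) 3 s := by
        simpa using ((hasDerivAt_id s).const_mul (3:ℝ)).sub_const 2
      exact (h1.div_const 6).congr_deriv (by norm_num)
    have hv : HasDerivAt (fun s : ℝ => (3 * s - 2) / 2) (3 / 2) s := by
      have h1 : HasDerivAt (fun s : ℝ => 3 * s - 2) 3 s := by
        simpa using ((hasDerivAt_id s).const_mul (3:ℝ)).sub_const 2
      exact h1.div_const 2
    have hvlt : (3 * s - 2) / 2 < 1 := by linarith
    have hvgt : -1 < (3 * s - 2) / 2 := by linarith
    have harc : HasDerivAt (fun s : ℝ => Real.arcsin ((3 * s - 2) / 2))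
        (1 / Real.sqrt (1 - ((3 * s - 2) / 2) ^ 2) * (3 / 2)) s :=
      by have := (Real.hasDerivAt_arcsin (by linarith) hvlt.ne).comp s hv; exact this
    have hrew : Real.sqrt (1 - ((3 * s - 2) / 2) ^ 2) = Real.sqrt 3 / 2 * r := by
      rw [show (1 : ℝ) - ((3 * s - 2) / 2) ^ 2 = 3 / 4 * (4 * s - 3 * s ^ 2) by ring,
        show (3 : ℝ) / 4 = 3 * (1 / 2) ^ 2 by norm_num, Real.sqrt_mul (by norm_num),
        Real.sqrt_mul (by norm_num : (0:ℝ) ≤ 3), Real.sqrt_sq (by norm_num : (0:ℝ) ≤ 1/2)]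
      ring
    have htotal := (hlin.mul hsqrt).add (harc.const_mul (2 * Real.sqrt 3 / 9))
    refine htotal.congr_deriv (Eq.symm ?_)
    rw [hrew]
    have h3 : (0:ℝ) < Real.sqrt 3 := Real.sqrt_pos.2 (by norm_num)
    simp only [g1, ← hr]
    field_simp
    linear_combination 54 * hr2
  have hInt : IntervalIntegrable g1 volume 1 (4/3) := g1_cont.intervalIntegrable _ _
  have := intervalIntegral.integral_eq_sub_of_hasDeriv_right_of_le (by norm_num) hcont
    (fun x hx => (hderiv x hx).hasDerivWithinAt) hInt
  rw [this, hF]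
  simp only
  rw [show ((3 : ℝ) * (4/3) - 2) / 2 = 1 by norm_num,
    show (4 : ℝ) * (4/3) - 3 * (4/3) ^ 2 = 0 by norm_num,
    show ((3 : ℝ) * 1 - 2) / 2 = 1/2 by norm_num,
    show (4 : ℝ) * 1 - 3 * 1 ^ 2 = 1 by norm_num]
  have harc : Real.arcsin (1 / 2) = π / 6 := by
    rw [← Real.sin_pi_div_six,
      Real.arcsin_sin (by linarith [Real.pi_pos]) (by linarith [Real.pi_pos])]
  rw [Real.sqrt_zero, Real.sqrt_one, Real.arcsin_one, harc]
  ring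

theorem vol1 :
    MeasureTheory.volume
        {pq : ℝ × ℝ | pq ∈ bacT ∧ 0 < bacS pq.1 pq.2 ∧ bacS pq.1 pq.2 < 1 / 2}
      = ENNReal.ofReal (1 / 3 - Real.sqrt 3 * π / 27) := by
  rw [set1_eq, vol_phi_preimage]
  have hA : ∫ s in (1:ℝ)..2, (2 - s - g1 s) = 2 / 3 - 2 * Real.sqrt 3 * π / 27 := by
    rw [intervalIntegral.integral_sub ((by continuity : Continuous fun s : ℝ => (2:ℝ) - s).intervalIntegrable _ _) (g1_cont.intervalIntegrable _ _)]
    have h1 : ∫ s in (1:ℝ)..2, (2 - s) = 1 / 2 := by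
      have : ∀ s ∈ Ioo (1:ℝ) 2, HasDerivAt (fun s : ℝ => 2 * s - s ^ 2 / 2) (2 - s) s := by
        intro s _
        have h1 : HasDerivAt (fun s : ℝ => 2 * s) 2 s := by
          simpa using (hasDerivAt_id s).const_mul (2:ℝ)
        have h2 : HasDerivAt (fun s : ℝ => s ^ 2 / 2) (2 * s / 2) s := by
          simpa using (hasDerivAt_pow 2 s).div_const 2
        refine (h1.sub h2).congr_deriv ?_
        ring
      rw [intervalIntegral.integral_eq_sub_of_hasDeriv_right_of_le (by norm_num)
        (by fun_prop) (fun x hx => (this x hx).hasDerivWithinAt)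
        ((by continuity : Continuous fun s : ℝ => (2:ℝ) - s).intervalIntegrable _ _)]
      norm_num
    have h2 : ∫ s in (1:ℝ)..2, g1 s = 2 * Real.sqrt 3 * π / 27 - 1 / 6 := by
      rw [← intervalIntegral.integral_add_adjacent_intervals
        (g1_cont.intervalIntegrable 1 (4/3)) (g1_cont.intervalIntegrable (4/3) 2), integral1]
      have hzero : ∫ s in (4/3 : ℝ)..2, g1 s = 0 := by
        rw [intervalIntegral.integral_congr (g := fun _ => (0:ℝ))
          (fun s hs => ?_)]
        · simp
        · rw [uIcc_of_le (by norm_num)] at hs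
          exact Real.sqrt_eq_zero'.2 (by nlinarith [hs.1, hs.2])
      rw [hzero]; ring
    rw [h1, h2]; ring
  rw [volE g1 g1_cont g1_nonneg g1_le _ hA, ← ENNReal.ofReal_mul (by norm_num)]
  congr 1
  ring

/-! ### Region 2 : `S < 1/3` -/

noncomputable def g2 : ℝ → ℝ := fun s => Real.sqrt (s ^ 2 * (3 - 2 * s) / max (2 * s - 1) 1)

lemma g2_cont : Continuous g2 := by
  apply Real.continuous_sqrt.comp
  apply Continuous.div (by continuity) (by continuity)
  intro s
  have : (1:ℝ) ≤ max (2 * s - 1) 1 := le_max_right _ _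
  linarith

lemma g2_nonneg (s : ℝ) : 0 ≤ g2 s := Real.sqrt_nonneg _

lemma max_eq_of_one_le {s : ℝ} (hs : 1 ≤ s) : max (2 * s - 1) 1 = 2 * s - 1 :=
  max_eq_left (by linarith)

lemma g2_le (s : ℝ) (hs : s ∈ Icc (1:ℝ) 2) : g2 s ≤ 2 - s := by
  obtain ⟨hs1, hs2⟩ := hs
  have h2 : (0:ℝ) ≤ 2 - s := by linarith
  have hden : (0:ℝ) < 2 * s - 1 := by linarith
  have harg : s ^ 2 * (3 - 2 * s) / max (2 * s - 1) 1 ≤ (2 - s) ^ 2 := by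
    rw [max_eq_of_one_le hs1, div_le_iff₀ hden]
    nlinarith [sq_nonneg (s - 1), pow_le_pow_left₀ (by linarith : (0:ℝ) ≤ s - 1) (by linarith : s - 1 ≤ 1) 3]
  calc g2 s ≤ Real.sqrt ((2 - s) ^ 2) := Real.sqrt_le_sqrt harg
    _ = 2 - s := Real.sqrt_sq h2

lemma g2_lt_iff {s d : ℝ} (hs : 1 ≤ s) (hd : 0 < d) :
    g2 s < d ↔ s ^ 2 * (3 - 2 * s) < d ^ 2 * (2 * s - 1) := by
  have hden : (0:ℝ) < 2 * s - 1 := by linarith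
  rw [g2, Real.sqrt_lt' hd, max_eq_of_one_le hs, div_lt_iff₀ hden]

lemma set2_eq :
    {pq : ℝ × ℝ | pq ∈ bacT ∧ 0 < bacS pq.1 pq.2 ∧ bacS pq.1 pq.2 < 1 / 3}
      = phi ⁻¹' {sd : ℝ × ℝ | 1 ≤ sd.1 ∧ g2 sd.1 < sd.2 ∧ sd.2 < 2 - sd.1} := by
  ext ⟨p, q⟩
  simp only [mem_setOf_eq, mem_preimage, phi, bacT]
  constructor
  · rintro ⟨⟨hp0, hpq, h1, hne⟩, hS0, hS⟩
    have hp : 0 < p := by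
      rcases hp0.lt_or_eq with h | h
      · exact h
      · exfalso; rw [bacS, if_pos h.symm] at hS0; exact lt_irrefl 0 hS0
    have hpoly : (1 - p) ^ 3 * p < q ^ 3 * (1 - q) :=
      (bacS_lt_iff p q hp hpq h1 3 (by norm_num)).1 (by exact_mod_cast hS)
    have hs : (1:ℝ) ≤ 1 - p + q := by linarith
    have hd : 0 < 1 - p - q := by linarith
    refine ⟨hs, ?_, by linarith⟩
    have hQ : 0 < -p^3 + (2 + q) * p^2 - (1 + q + q^2) * p + q^3 := by
      by_contra hcon
      push_neg at hcon
      nlinarith [mul_nonpos_of_nonneg_of_nonpos hd.le hcon]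
    rw [g2_lt_iff hs hd]
    nlinarith
  · rintro ⟨hs, hgd, hd2⟩
    have hp : 0 < p := by linarith
    have hpq : p ≤ q := by linarith
    have hd : 0 < 1 - p - q := lt_of_le_of_lt (g2_nonneg _) hgd
    have h1 : p + q < 1 := by linarith
    rw [g2_lt_iff hs hd] at hgd
    have hQ : 0 < -p^3 + (2 + q) * p^2 - (1 + q + q^2) * p + q^3 := by nlinarith
    have hpoly : (1 - p) ^ 3 * p < q ^ 3 * (1 - q) := by nlinarith
    refine ⟨⟨hp.le, hpq, h1, by simp [Prod.ext_iff]; intro h; exact absurd h hp.ne'⟩,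
      bacS_pos p q hp hpq h1, ?_⟩
    have := (bacS_lt_iff p q hp hpq h1 3 (by norm_num)).2 hpoly
    exact_mod_cast this

lemma integral2 : ∫ s in (1:ℝ)..(3/2 : ℝ), g2 s = 3 * π / 16 - 1 / 4 := by
  set F : ℝ → ℝ := fun s =>
    s / 4 * Real.sqrt (-4 * s ^ 2 + 8 * s - 3) + 3 / 8 * Real.arcsin (2 * s - 2) with hF
  have hcont : ContinuousOn F (Icc 1 (3/2)) := by
    apply ContinuousOn.add
    · exact ContinuousOn.mul (by fun_prop) ((Real.continuous_sqrt.comp (by continuity)).continuousOn)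
    · exact ContinuousOn.mul (by fun_prop) ((Real.continuous_arcsin.comp (by continuity)).continuousOn)
  have hderiv : ∀ s ∈ Ioo (1:ℝ) (3/2), HasDerivAt F (g2 s) s := by
    intro s hs
    obtain ⟨hs1, hs2⟩ := hs
    have hu : 0 < -4 * s ^ 2 + 8 * s - 3 := by nlinarith
    set r := Real.sqrt (-4 * s ^ 2 + 8 * s - 3) with hr
    have hrpos : 0 < r := Real.sqrt_pos.2 hu
    have hr2 : r ^ 2 = -4 * s ^ 2 + 8 * s - 3 := Real.sq_sqrt hu.le
    have hsqrt : HasDerivAt (fun s : ℝ => Real.sqrt (-4 * s ^ 2 + 8 * s - 3))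
        ((-8 * s + 8) / (2 * r)) s := by
      have hpoly : HasDerivAt (fun s : ℝ => -4 * s ^ 2 + 8 * s - 3) (-8 * s + 8) s := by
        have h1 : HasDerivAt (fun s : ℝ => -4 * s ^ 2) (-4 * (2 * s)) s := by
          simpa using ((hasDerivAt_pow 2 s).const_mul (-4:ℝ))
        have h2 : HasDerivAt (fun s : ℝ => 8 * s) 8 s := by
          simpa using (hasDerivAt_id s).const_mul (8:ℝ)
        exact ((h1.add h2).sub_const 3).congr_deriv (by ring)
      exact hpoly.sqrt hu.ne'
    have hlin : HasDerivAt (fun s : ℝ => s / 4) (1 / 4) s := by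
      simpa using (hasDerivAt_id s).div_const 4
    have hv : HasDerivAt (fun s : ℝ => 2 * s - 2) 2 s := by
      simpa using ((hasDerivAt_id s).const_mul (2:ℝ)).sub_const 2
    have hvlt : 2 * s - 2 < 1 := by linarith
    have hvgt : (-1:ℝ) < 2 * s - 2 := by linarith
    have harc : HasDerivAt (fun s : ℝ => Real.arcsin (2 * s - 2))
        (1 / Real.sqrt (1 - (2 * s - 2) ^ 2) * 2) s :=
      by have := (Real.hasDerivAt_arcsin hvgt.ne' hvlt.ne).comp s hv; exact this
    have hrew : Real.sqrt (1 - (2 * s - 2) ^ 2) = r := by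
      rw [show (1:ℝ) - (2 * s - 2) ^ 2 = -4 * s ^ 2 + 8 * s - 3 by ring, ← hr]
    have htotal := (hlin.mul hsqrt).add (harc.const_mul (3 / 8 : ℝ))
    refine htotal.congr_deriv (Eq.symm ?_)
    rw [hrew]
    have hden : (0:ℝ) < 2 * s - 1 := by linarith
    have h32 : (0:ℝ) < 3 - 2 * s := by linarith
    have hkey : s ^ 2 * (3 - 2 * s) / (2 * s - 1) = (s * (3 - 2 * s) / r) ^ 2 := by
      rw [div_pow, hr2, div_eq_div_iff hden.ne' hu.ne']
      ring
    have hg2 : g2 s = s * (3 - 2 * s) / r := by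
      rw [g2, max_eq_of_one_le hs1.le, hkey, Real.sqrt_sq (by positivity)]
    rw [hg2, ← hr]
    clear_value r
    field_simp
    linear_combination (-16) * hr2
  have hInt : IntervalIntegrable g2 volume 1 (3/2) := g2_cont.intervalIntegrable _ _
  have := intervalIntegral.integral_eq_sub_of_hasDeriv_right_of_le (by norm_num) hcont
    (fun x hx => (hderiv x hx).hasDerivWithinAt) hInt
  rw [this, hF]
  simp only
  rw [show (-4 : ℝ) * (3/2) ^ 2 + 8 * (3/2) - 3 = 0 by norm_num,
    show (2 : ℝ) * (3/2) - 2 = 1 by norm_num,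
    show (-4 : ℝ) * 1 ^ 2 + 8 * 1 - 3 = 1 by norm_num,
    show (2 : ℝ) * 1 - 2 = 0 by norm_num,
    Real.sqrt_zero, Real.sqrt_one, Real.arcsin_one, Real.arcsin_zero]
  ring

theorem vol2 :
    MeasureTheory.volume
        {pq : ℝ × ℝ | pq ∈ bacT ∧ 0 < bacS pq.1 pq.2 ∧ bacS pq.1 pq.2 < 1 / 3}
      = ENNReal.ofReal (3 / 8 - 3 * π / 32) := by
  rw [set2_eq, vol_phi_preimage]
  have hA : ∫ s in (1:ℝ)..2, (2 - s - g2 s) = 3 / 4 - 3 * π / 16 := by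
    rw [intervalIntegral.integral_sub ((by continuity : Continuous fun s : ℝ => (2:ℝ) - s).intervalIntegrable _ _) (g2_cont.intervalIntegrable _ _)]
    have h1 : ∫ s in (1:ℝ)..2, (2 - s) = 1 / 2 := by
      have : ∀ s ∈ Ioo (1:ℝ) 2, HasDerivAt (fun s : ℝ => 2 * s - s ^ 2 / 2) (2 - s) s := by
        intro s _
        have h1 : HasDerivAt (fun s : ℝ => 2 * s) 2 s := by
          simpa using (hasDerivAt_id s).const_mul (2:ℝ)
        have h2 : HasDerivAt (fun s : ℝ => s ^ 2 / 2) (2 * s / 2) s := by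
          simpa using (hasDerivAt_pow 2 s).div_const 2
        refine (h1.sub h2).congr_deriv ?_
        ring
      rw [intervalIntegral.integral_eq_sub_of_hasDeriv_right_of_le (by norm_num)
        (by fun_prop) (fun x hx => (this x hx).hasDerivWithinAt)
        ((by continuity : Continuous fun s : ℝ => (2:ℝ) - s).intervalIntegrable _ _)]
      norm_num
    have h2 : ∫ s in (1:ℝ)..2, g2 s = 3 * π / 16 - 1 / 4 := by
      rw [← intervalIntegral.integral_add_adjacent_intervals
        (g2_cont.intervalIntegrable 1 (3/2)) (g2_cont.intervalIntegrable (3/2) 2), integral2]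
      have hzero : ∫ s in (3/2 : ℝ)..2, g2 s = 0 := by
        rw [intervalIntegral.integral_congr (g := fun _ => (0:ℝ))
          (fun s hs => ?_)]
        · simp
        · rw [uIcc_of_le (by norm_num)] at hs
          obtain ⟨ha, hb⟩ := hs
          have hden : (0:ℝ) < max (2 * s - 1) 1 := lt_of_lt_of_le one_pos (le_max_right _ _)
          refine Real.sqrt_eq_zero'.2 (div_nonpos_of_nonpos_of_nonneg ?_ hden.le)
          nlinarith
      rw [hzero]; ring
    rw [h1, h2]; ring
  rw [volE g2 g2_cont g2_nonneg g2_le _ hA, ← ENNReal.ofReal_mul (by norm_num)]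
  congr 1
  ring

end BacAux

theorem stmt17 :
    MeasureTheory.volume
        {pq : ℝ × ℝ | pq ∈ bacT ∧ 0 < bacS pq.1 pq.2 ∧ bacS pq.1 pq.2 < 1 / 2}
      = ENNReal.ofReal (1 / 3 - Real.sqrt 3 * Real.pi / 27) ∧
    MeasureTheory.volume
        {pq : ℝ × ℝ | pq ∈ bacT ∧ 0 < bacS pq.1 pq.2 ∧ bacS pq.1 pq.2 < 1 / 3}
      = ENNReal.ofReal (3 / 8 - 3 * Real.pi / 32) := by
  exact ⟨BacAux.vol1, BacAux.vol2⟩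
end

section
/- The BAC-function S is continuous on T (with the subspace topology inherited from ℝ²), takes values in [0,1], and its image is exactly the interval [0,1]; the value 0 is attained exactly when p = 0 and the value 1 exactly when p = q. -/
open Real Set Filter Topology

lemma bacT_q_pos {pq : ℝ × ℝ} (h : pq ∈ bacT) : 0 < pq.2 := by
  obtain ⟨h1, h2, h3, h4⟩ := h
  rcases lt_or_eq_of_le (h1.trans h2) with hq | hq
  · exact hq
  · exfalso; apply h4; apply Prod.ext <;> simp <;> [skip; exact hq.symm]
    linarith [h2, hq.symm.le]

lemma den_pos {p q : ℝ} (hp : 0 < p) (hpq : p + q < 1) :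
    0 < Real.log (1 - q) - Real.log p :=
  sub_pos.2 (Real.log_lt_log hp (by linarith))

lemma num_pos {p q : ℝ} (hq : 0 < q) (hpq : p + q < 1) :
    0 < Real.log (1 - p) - Real.log q :=
  sub_pos.2 (Real.log_lt_log hq (by linarith))

lemma num_le_den {p q : ℝ} (hp : 0 < p) (hle : p ≤ q) (hpq : p + q < 1) :
    Real.log (1 - p) - Real.log q ≤ Real.log (1 - q) - Real.log p := by
  have hq : 0 < q := lt_of_lt_of_le hp hle
  have h1 : (0:ℝ) < p * (1 - p) := by nlinarith
  have h2 : p * (1 - p) ≤ q * (1 - q) := by nlinarith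
  have := Real.log_le_log h1 h2
  rw [Real.log_mul (ne_of_gt hp) (by nlinarith), Real.log_mul (ne_of_gt hq) (by nlinarith)] at this
  linarith

lemma bacS_mem {pq : ℝ × ℝ} (h : pq ∈ bacT) : bacS pq.1 pq.2 ∈ Set.Icc (0:ℝ) 1 := by
  obtain ⟨h1, h2, h3, h4⟩ := h
  have hq := bacT_q_pos ⟨h1, h2, h3, h4⟩
  unfold bacS
  split_ifs with hp
  · exact ⟨le_refl 0, zero_le_one⟩
  · have hp' : 0 < pq.1 := lt_of_le_of_ne h1 (Ne.symm hp)
    constructor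
    · exact div_nonneg (num_pos hq h3).le (den_pos hp' h3).le
    · exact div_le_one_of_le₀ (num_le_den hp' h2 h3) (den_pos hp' h3).le

lemma bacS_eq_zero_iff {pq : ℝ × ℝ} (h : pq ∈ bacT) : bacS pq.1 pq.2 = 0 ↔ pq.1 = 0 := by
  obtain ⟨h1, h2, h3, h4⟩ := h
  have hq := bacT_q_pos ⟨h1, h2, h3, h4⟩
  unfold bacS
  split_ifs with hp
  · simp [hp]
  · simp only [hp, iff_false]
    have hp' : 0 < pq.1 := lt_of_le_of_ne h1 (Ne.symm hp)
    exact ne_of_gt (div_pos (num_pos hq h3) (den_pos hp' h3))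

lemma bacS_eq_one_iff {pq : ℝ × ℝ} (h : pq ∈ bacT) : bacS pq.1 pq.2 = 1 ↔ pq.1 = pq.2 := by
  obtain ⟨h1, h2, h3, h4⟩ := h
  have hq := bacT_q_pos ⟨h1, h2, h3, h4⟩
  unfold bacS
  split_ifs with hp
  · simp only [zero_ne_one, false_iff]
    intro he; rw [hp] at he; exact absurd he.symm (ne_of_gt hq)
  · have hp' : 0 < pq.1 := lt_of_le_of_ne h1 (Ne.symm hp)
    have hd := den_pos hp' h3
    rw [div_eq_one_iff_eq (ne_of_gt hd)]
    constructor
    · intro he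
      have : Real.log (pq.1 * (1 - pq.1)) = Real.log (pq.2 * (1 - pq.2)) := by
        rw [Real.log_mul (ne_of_gt hp') (by nlinarith), Real.log_mul (ne_of_gt hq) (by nlinarith)]
        linarith
      have heq : pq.1 * (1 - pq.1) = pq.2 * (1 - pq.2) :=
        Real.log_injOn_pos (Set.mem_Ioi.2 (by nlinarith)) (Set.mem_Ioi.2 (by nlinarith)) this
      nlinarith
    · intro he; rw [he]

lemma bacS_cont : ContinuousOn (fun pq : ℝ × ℝ => bacS pq.1 pq.2) bacT := by
  intro pq hpq
  obtain ⟨h1, h2, h3, h4⟩ := hpq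
  have hq := bacT_q_pos ⟨h1, h2, h3, h4⟩
  rcases lt_or_eq_of_le h1 with hp | hp
  · -- p > 0 : continuous at pq
    apply ContinuousWithinAt.mono _ (Set.subset_univ _)
    rw [continuousWithinAt_univ]
    have hopen : ∀ᶠ x : ℝ × ℝ in 𝓝 pq, 0 < x.1 :=
      eventually_of_mem ((isOpen_lt continuous_const continuous_fst).mem_nhds hp) (fun x h => h)
    have hF : ContinuousAt (fun x : ℝ × ℝ =>
        (Real.log (1 - x.1) - Real.log x.2) / (Real.log (1 - x.2) - Real.log x.1)) pq := by
      have l1 : ContinuousAt (fun x : ℝ × ℝ => Real.log (1 - x.1)) pq :=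
        (Real.continuousAt_log (by intro h; nlinarith [h])).comp
          (continuous_const.sub continuous_fst).continuousAt
      have l2 : ContinuousAt (fun x : ℝ × ℝ => Real.log x.2) pq :=
        (Real.continuousAt_log (ne_of_gt hq)).comp continuous_snd.continuousAt
      have l3 : ContinuousAt (fun x : ℝ × ℝ => Real.log (1 - x.2)) pq :=
        (Real.continuousAt_log (by intro h; nlinarith [h])).comp
          (continuous_const.sub continuous_snd).continuousAt
      have l4 : ContinuousAt (fun x : ℝ × ℝ => Real.log x.1) pq :=
        (Real.continuousAt_log (ne_of_gt hp)).comp continuous_fst.continuousAt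
      exact (l1.sub l2).div (l3.sub l4) (ne_of_gt (den_pos hp h3))
    apply hF.congr
    filter_upwards [hopen] with x hx
    simp [bacS, ne_of_gt hx]
  · -- p = 0 : limit within T is 0
    have hq1 : pq.2 < 1 := by linarith
    have hf0 : bacS pq.1 pq.2 = 0 := by simp [bacS, ← hp]
    have goal : Tendsto (fun x : ℝ × ℝ => bacS x.1 x.2) (𝓝[bacT] pq) (𝓝 0) := ?_
    · simpa [ContinuousWithinAt, hf0] using goal
    have hsub : bacT ⊆ {x : ℝ × ℝ | x.1 = 0} ∪ {x : ℝ × ℝ | 0 < x.1} := by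
      intro x hx
      rcases eq_or_lt_of_le hx.1 with h | h
      · exact Or.inl h.symm
      · exact Or.inr h
    apply Tendsto.mono_left _ (nhdsWithin_mono pq hsub)
    rw [nhdsWithin_union, tendsto_sup]
    constructor
    · apply tendsto_nhdsWithin_congr (f := fun _ : ℝ × ℝ => (0:ℝ))
      · intro x hx
        simp only [Set.mem_setOf_eq] at hx
        simp [bacS, hx]
      · exact tendsto_const_nhds
    · -- on {0 < x.1} : N/D with D → atTop
      set B : Set (ℝ × ℝ) := {x : ℝ × ℝ | 0 < x.1}
      have hNtend : Tendsto (fun x : ℝ × ℝ => Real.log (1 - x.1) - Real.log x.2)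
          (𝓝[B] pq) (𝓝 (Real.log (1 - pq.1) - Real.log pq.2)) := by
        apply Tendsto.mono_left _ nhdsWithin_le_nhds
        exact (((Real.continuousAt_log (by intro h; simp only [Pi.sub_apply] at h; nlinarith [h])).comp
          (continuous_const.sub continuous_fst).continuousAt).sub
          ((Real.continuousAt_log (ne_of_gt hq)).comp continuous_snd.continuousAt))
      have hfst : Tendsto (fun x : ℝ × ℝ => x.1) (𝓝[B] pq) (𝓝[>] (0:ℝ)) := by
        rw [tendsto_nhdsWithin_iff]
        constructor
        · have := (continuous_fst.tendsto pq).mono_left (nhdsWithin_le_nhds (s := B))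
          rwa [← hp] at this
        · exact eventually_mem_nhdsWithin.mono (fun x hx => hx)
      have hlogp : Tendsto (fun x : ℝ × ℝ => Real.log x.1) (𝓝[B] pq) atBot :=
        Real.tendsto_log_nhdsGT_zero.comp hfst
      have hDtend : Tendsto (fun x : ℝ × ℝ => Real.log (1 - x.2) - Real.log x.1)
          (𝓝[B] pq) atTop := by
        have hc : Tendsto (fun x : ℝ × ℝ => Real.log (1 - x.2)) (𝓝[B] pq)
            (𝓝 (Real.log (1 - pq.2))) := by
          apply Tendsto.mono_left _ nhdsWithin_le_nhds
          exact ((Real.continuousAt_log (by intro h; nlinarith [h])).comp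
            (continuous_const.sub continuous_snd).continuousAt)
        have := hc.add_atTop (tendsto_neg_atTop_iff.mpr hlogp)
        simpa [sub_eq_add_neg] using this
      have key : Tendsto (fun x : ℝ × ℝ =>
          (Real.log (1 - x.1) - Real.log x.2) * (Real.log (1 - x.2) - Real.log x.1)⁻¹)
          (𝓝[B] pq) (𝓝 0) := by
        have := hNtend.mul hDtend.inv_tendsto_atTop
        rwa [mul_zero] at this
      apply tendsto_nhdsWithin_congr (f := fun x : ℝ × ℝ =>
          (Real.log (1 - x.1) - Real.log x.2) * (Real.log (1 - x.2) - Real.log x.1)⁻¹) _ key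
      intro x hx
      simp only [B, Set.mem_setOf_eq] at hx
      simp [bacS, ne_of_gt hx, div_eq_mul_inv]


lemma bacT_seg : ∀ p ∈ Set.Icc (0:ℝ) (1/4), ((p, (1/4:ℝ)) : ℝ × ℝ) ∈ bacT := by
  intro p hp
  refine ⟨hp.1, hp.2, by norm_num; linarith [hp.2], ?_⟩
  simp [Prod.ext_iff]

lemma bacS_image : (fun pq : ℝ × ℝ => bacS pq.1 pq.2) '' bacT = Set.Icc (0:ℝ) 1 := by
  apply Set.Subset.antisymm
  · rintro _ ⟨x, hx, rfl⟩
    exact bacS_mem hx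
  · intro s hs
    have hcont : ContinuousOn (fun p : ℝ => bacS p (1/4)) (Set.Icc (0:ℝ) (1/4)) := by
      have hg : ContinuousOn (fun p : ℝ => ((p, (1/4:ℝ)) : ℝ × ℝ)) (Set.Icc (0:ℝ) (1/4)) :=
        (continuous_id.prodMk continuous_const).continuousOn
      exact bacS_cont.comp hg bacT_seg
    have hf0 : bacS (0:ℝ) (1/4) = 0 := by simp [bacS]
    have hf1 : bacS (1/4:ℝ) (1/4) = 1 := by
      have hd : (0:ℝ) < Real.log (1 - 1/4) - Real.log (1/4) := den_pos (by norm_num) (by norm_num)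
      simp only [bacS, if_neg (by norm_num : (1/4:ℝ) ≠ 0)]
      exact div_self (ne_of_gt hd)
    have := intermediate_value_Icc (by norm_num : (0:ℝ) ≤ 1/4) hcont
    rw [hf0, hf1] at this
    obtain ⟨p, hp, hps⟩ := this hs
    exact ⟨(p, 1/4), bacT_seg p hp, hps⟩

theorem stmt18 :
    ContinuousOn (fun pq : ℝ × ℝ => bacS pq.1 pq.2) bacT ∧
    (∀ pq ∈ bacT, bacS pq.1 pq.2 ∈ Set.Icc (0 : ℝ) 1) ∧
    (fun pq : ℝ × ℝ => bacS pq.1 pq.2) '' bacT = Set.Icc (0 : ℝ) 1 ∧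
    (∀ pq ∈ bacT, (bacS pq.1 pq.2 = 0 ↔ pq.1 = 0)) ∧
    (∀ pq ∈ bacT, (bacS pq.1 pq.2 = 1 ↔ pq.1 = pq.2)) :=
  ⟨bacS_cont, fun _ h => bacS_mem h, bacS_image,
    fun _ h => bacS_eq_zero_iff h, fun _ h => bacS_eq_one_iff h⟩
end
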